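/- arXiv:2201.05030 — 6 statements merged into one kernel-verified Lean document; each statement's English description precedes it below -/
import Mathlib

section
/- Let U ⊆ ℝ^n be an open convex set invariant under permutations of the coordinates, and let f : U → ℝ be a differentiable concave function that is invariant under permutations of the coordinates. If λ ∈ U and p, q are indices with λ_p ≤ λ_q, then ∂f/∂λ_p(λ) ≥ ∂f/∂λ_q(λ). In particular, if λ_1 ≤ λ_2 ≤ ⋯ ≤ λ_n then the partial derivatives satisfy f_1(λ) ≥ f_2(λ) ≥ ⋯ ≥ f_n(λ). -/
/-!
Restrict `f` to the line `g t = f (λ + t • (e_p - e_q))`. Swapping the coordinates `p` and `q`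
reflects this line about `t = c / 2`, where `c = λ_q - λ_p ≥ 0`, so `g (c - t) = g t` and hence
`g' 0 = -g' c`. Concavity makes `g'` antitone, so `g' c ≤ g' 0`, and therefore
`f_p λ - f_q λ = g' 0 ≥ 0`.
-/

open Filter Topology

theorem ConcaveOn.comp_line {E : Type*} [AddCommGroup E] [Module ℝ E] {s : Set E} {f : E → ℝ}
    (hf : ConcaveOn ℝ s f) (x v : E) :
    ConcaveOn ℝ {t : ℝ | x + t • v ∈ s} (fun t ↦ f (x + t • v)) := by
  have hline : ⇑(AffineMap.lineMap x (x + v) : ℝ →ᵃ[ℝ] E) = fun t ↦ x + t • v := by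
    ext t
    rw [AffineMap.lineMap_apply_module', add_sub_cancel_left, add_comm]
  have := hf.comp_affineMap (AffineMap.lineMap x (x + v))
  rwa [hline] at this

theorem ConcaveOn.deriv_nonneg_of_reflect_eq {S : Set ℝ} {g : ℝ → ℝ} {c : ℝ}
    (hg : ConcaveOn ℝ S g) (hS : IsOpen S) (hgd : ∀ t ∈ S, DifferentiableAt ℝ g t)
    (hsymm : ∀ t ∈ S, g (c - t) = g t) (h0 : 0 ∈ S) (hc : c ∈ S) (hc0 : 0 ≤ c) :
    0 ≤ deriv g 0 := by
  have hreflect : deriv g 0 = -deriv g c := by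
    have heq : (fun t ↦ g (c - t)) =ᶠ[𝓝 0] g := eventually_of_mem (hS.mem_nhds h0) hsymm
    rw [← heq.deriv_eq, deriv_comp_const_sub, sub_zero]
  have hanti : deriv g c ≤ deriv g 0 := hg.antitoneOn_deriv hgd h0 hc hc0
  linarith

theorem ConcaveOn.lineDeriv_nonneg_of_reflect_eq {E : Type*} [NormedAddCommGroup E]
    [NormedSpace ℝ E] {s : Set E} {f : E → ℝ} (hf : ConcaveOn ℝ s f) (hs : IsOpen s)
    (hfd : ∀ y ∈ s, DifferentiableAt ℝ f y) {x v : E} {c : ℝ}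
    (hsymm : ∀ t : ℝ, x + t • v ∈ s → f (x + (c - t) • v) = f (x + t • v))
    (hx : x ∈ s) (hc : x + c • v ∈ s) (hc0 : 0 ≤ c) :
    0 ≤ lineDeriv ℝ f x v := by
  refine (hf.comp_line x v).deriv_nonneg_of_reflect_eq ?_ ?_ hsymm (by simpa using hx) hc hc0
  · exact hs.preimage (by fun_prop)
  · intro t ht
    exact (hfd _ ht).comp t (by fun_prop)

theorem add_smul_single_sub_single_comp_swap {ι : Type*} [DecidableEq ι] (x : ι → ℝ) (p q : ι)
    (t : ℝ) :
    (x + t • (Pi.single p 1 - Pi.single q 1)) ∘ Equiv.swap p q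
      = x + (x q - x p - t) • (Pi.single p 1 - Pi.single q 1) := by
  ext i
  rcases eq_or_ne p q with rfl | hpq
  · simp
  rcases eq_or_ne i p with rfl | hip
  · simp [hpq]
    ring
  rcases eq_or_ne i q with rfl | hiq
  · simp [hpq.symm]
    ring
  · simp [Equiv.swap_apply_of_ne_of_ne hip hiq, hip, hiq]

theorem concave_symmetric_partial_deriv_antitone_general (n : ℕ) (U : Set (Fin n → ℝ))
    (hUopen : IsOpen U)
    (hUsymm : ∀ σ : Equiv.Perm (Fin n), ∀ x ∈ U, x ∘ σ ∈ U)
    (f : (Fin n → ℝ) → ℝ)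
    (hdiff : ∀ x ∈ U, DifferentiableAt ℝ f x)
    (hconc : ConcaveOn ℝ U f)
    (hfsymm : ∀ σ : Equiv.Perm (Fin n), ∀ x ∈ U, f (x ∘ σ) = f x)
    (lam : Fin n → ℝ) (hlam : lam ∈ U) (p q : Fin n) (hpq : lam p ≤ lam q) :
    fderiv ℝ f lam (Pi.single q 1) ≤ fderiv ℝ f lam (Pi.single p 1) := by
  set v : Fin n → ℝ := Pi.single p 1 - Pi.single q 1
  have hswap (t : ℝ) : (lam + t • v) ∘ Equiv.swap p q = lam + (lam q - lam p - t) • v :=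
    add_smul_single_sub_single_comp_swap lam p q t
  have hsymm (t : ℝ) (ht : lam + t • v ∈ U) :
      f (lam + (lam q - lam p - t) • v) = f (lam + t • v) := by
    rw [← hswap, hfsymm _ _ ht]
  have hc : lam + (lam q - lam p) • v ∈ U := by
    have := hUsymm (Equiv.swap p q) (lam + (0 : ℝ) • v) (by rwa [zero_smul, add_zero])
    rwa [hswap, sub_zero] at this
  have hnonneg :=
    hconc.lineDeriv_nonneg_of_reflect_eq hUopen hdiff hsymm hlam hc (sub_nonneg.2 hpq)
  rw [(hdiff lam hlam).lineDeriv_eq_fderiv, map_sub] at hnonneg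
  linarith

/-- A differentiable concave function on an open convex permutation-invariant set,
itself invariant under permutations of the coordinates, has partial derivatives that
are antitone with respect to the ordering of the coordinates of the point. -/
theorem concave_symmetric_partial_deriv_antitone (n : ℕ) (U : Set (Fin n → ℝ))
    (hUopen : IsOpen U) (hUconv : Convex ℝ U)
    (hUsymm : ∀ σ : Equiv.Perm (Fin n), ∀ x ∈ U, x ∘ σ ∈ U)
    (f : (Fin n → ℝ) → ℝ)
    (hdiff : ∀ x ∈ U, DifferentiableAt ℝ f x)
    (hconc : ConcaveOn ℝ U f)
    (hfsymm : ∀ σ : Equiv.Perm (Fin n), ∀ x ∈ U, f (x ∘ σ) = f x)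
    (lam : Fin n → ℝ) (hlam : lam ∈ U) (p q : Fin n) (hpq : lam p ≤ lam q) :
    fderiv ℝ f lam (Pi.single q 1) ≤ fderiv ℝ f lam (Pi.single p 1) :=
  concave_symmetric_partial_deriv_antitone_general n U hUopen hUsymm f hdiff hconc hfsymm lam hlam p
    q hpq
end

section
/- Let 2 ≤ k ≤ n and B ≥ 0. There exists a constant C > 0, depending only on n, k, B, such that for every λ ∈ Γ_{k−1} and all β_0,…,β_{k−2} ∈ [0,B], if |f(λ)| ≤ B then −B ≤ σ_k(λ)/σ_{k−1}(λ) ≤ C. -/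
open Finset

/-- The `k`-th elementary symmetric function of `lam : Fin n → ℝ`. -/
noncomputable def esymm (n k : ℕ) (lam : Fin n → ℝ) : ℝ :=
  ∑ s ∈ Finset.powersetCard k (Finset.univ : Finset (Fin n)), ∏ i ∈ s, lam i

/-- The Gårding cone `Γ_k ⊆ ℝ^n`. -/
def GammaCone (n k : ℕ) : Set (Fin n → ℝ) :=
  {lam | ∀ i : ℕ, 1 ≤ i → i ≤ k → 0 < esymm n i lam}

/-- The mixed Hessian operator
`f(λ) = σ_k(λ)/σ_{k-1}(λ) - ∑_{l=0}^{k-2} β_l σ_l(λ)/σ_{k-1}(λ)`. -/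
noncomputable def fmix (n k : ℕ) (β : ℕ → ℝ) (lam : Fin n → ℝ) : ℝ :=
  esymm n k lam / esymm n (k-1) lam
    - ∑ l ∈ Finset.range (k-1), β l * (esymm n l lam / esymm n (k-1) lam)

namespace NewtonAux

open Polynomial


lemma msum_nonneg {s : Multiset ℝ} (h : ∀ x ∈ s, 0 ≤ x) : 0 ≤ s.sum :=
  Multiset.sum_nonneg h

lemma mprod_nonneg {s : Multiset ℝ} (h : ∀ x ∈ s, 0 ≤ x) : 0 ≤ s.prod := by
  induction s using Multiset.induction with
  | empty => simp
  | cons a t ih =>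
    rw [Multiset.prod_cons]
    exact mul_nonneg (h a (Multiset.mem_cons_self a t))
      (ih fun x hx => h x (Multiset.mem_cons_of_mem hx))

lemma esymm_zero' (s : Multiset ℝ) : s.esymm 0 = 1 := by
  simp [Multiset.esymm]

lemma esymm_of_card_lt {s : Multiset ℝ} {k : ℕ} (h : Multiset.card s < k) :
    s.esymm k = 0 := by
  obtain ⟨i, hi, rfl⟩ : ∃ i, 0 < i ∧ k = Multiset.card s + i :=
    ⟨k - Multiset.card s, by omega, by omega⟩
  simp [Multiset.esymm, Multiset.powersetCard_card_add _ hi]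

lemma powersetCard_self (s : Multiset ℝ) :
    s.powersetCard (Multiset.card s) = {s} := by
  have hcard : Multiset.card (s.powersetCard (Multiset.card s)) = 1 := by
    rw [Multiset.card_powersetCard, Nat.choose_self]
  obtain ⟨a, ha⟩ := Multiset.card_eq_one.mp hcard
  have hmem : a ∈ s.powersetCard (Multiset.card s) := by
    rw [ha]; exact Multiset.mem_singleton_self a
  rw [Multiset.mem_powersetCard] at hmem
  rw [ha, Multiset.eq_of_le_of_card_le hmem.1 hmem.2.symm.le]

lemma esymm_card (s : Multiset ℝ) : s.esymm (Multiset.card s) = s.prod := by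
  rw [Multiset.esymm, powersetCard_self]; simp

lemma esymm_nonneg {s : Multiset ℝ} (h : ∀ x ∈ s, 0 ≤ x) (k : ℕ) :
    0 ≤ s.esymm k := by
  apply msum_nonneg
  intro x hx
  obtain ⟨t, ht, rfl⟩ := Multiset.mem_map.mp hx
  exact mprod_nonneg fun y hy =>
    h y (Multiset.mem_of_le (Multiset.mem_powersetCard.mp ht).1 hy)

lemma esymm_cons (a : ℝ) (s : Multiset ℝ) (k : ℕ) :
    (a ::ₘ s).esymm (k+1) = s.esymm (k+1) + a * s.esymm k := by
  rw [Multiset.esymm, Multiset.powersetCard_cons, Multiset.map_add, Multiset.sum_add,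
    Multiset.map_map]
  congr 1
  rw [Multiset.esymm, ← Multiset.sum_map_mul_left]
  apply congrArg
  apply Multiset.map_congr rfl
  intro t ht
  simp [Multiset.prod_cons]



lemma key_id : ∀ (c : ℕ) (s : Multiset ℝ), Multiset.card s = c + 2 →
    s.esymm (c+1) ^ 2 =
      2 * s.esymm c * s.esymm (c+2) + (s.map (fun x => x^2)).esymm (c+1) := by
  intro c
  induction c with
  | zero =>
    intro s hs
    obtain ⟨a, b, rfl⟩ := Multiset.card_eq_two.mp hs
    have hb : ∀ x : ℝ, ({x} : Multiset ℝ).esymm 1 = x := by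
      intro x; have := esymm_card ({x} : Multiset ℝ); simpa using this
    have h1 : ({a, b} : Multiset ℝ).esymm 1 = a + b := by
      rw [show ({a, b} : Multiset ℝ) = a ::ₘ {b} from rfl, show (1:ℕ) = 0 + 1 from rfl,
        esymm_cons, esymm_zero']
      rw [show (0:ℕ)+1 = 1 from rfl, hb]; ring
    have h2 : ({a, b} : Multiset ℝ).esymm 2 = a * b := by
      have := esymm_card ({a, b} : Multiset ℝ); simpa using this
    have h3 : (({a, b} : Multiset ℝ).map (fun x => x^2)).esymm 1 = a^2 + b^2 := by
      rw [show ({a, b} : Multiset ℝ).map (fun x => x^2) = ({a^2, b^2} : Multiset ℝ) from by simp,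
        show ({a^2, b^2} : Multiset ℝ) = a^2 ::ₘ {b^2} from rfl, show (1:ℕ) = 0 + 1 from rfl,
        esymm_cons, esymm_zero']
      rw [show (0:ℕ)+1 = 1 from rfl, hb]; ring
    rw [show (0:ℕ)+1 = 1 from rfl, show (0:ℕ)+2 = 2 from rfl, h1, h2, h3, esymm_zero']
    ring
  | succ c ih =>
    intro s hs
    have hne : s ≠ 0 := by intro h; rw [h] at hs; simp at hs
    obtain ⟨a, ha⟩ := Multiset.exists_mem_of_ne_zero hne
    obtain ⟨u, rfl⟩ := Multiset.exists_cons_of_mem ha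
    have hu : Multiset.card u = c + 2 := by
      have := hs; rw [Multiset.card_cons] at this; omega
    have hih := ih u hu
    have hPu : u.esymm (c+2) = u.prod := by rw [← hu, esymm_card]
    have h3 : u.esymm (c+3) = 0 := esymm_of_card_lt (by omega)
    have hsq : (u.map (fun x => x^2)).esymm (c+2) = u.prod ^ 2 := by
      rw [show c + 2 = Multiset.card (u.map (fun x => x^2)) from by simp [hu], esymm_card]
      rw [show (fun x : ℝ => x^2) = (fun x : ℝ => id x ^ 2) from rfl,
        Multiset.prod_map_pow, Multiset.map_id]
    rw [show c+1+1 = (c+1)+1 from rfl, show c+1+2 = (c+2)+1 from rfl]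
    rw [esymm_cons a u (c+1), esymm_cons a u c, esymm_cons a u (c+2), Multiset.map_cons,
      esymm_cons (a^2) (u.map (fun x => x^2)) (c+1)]
    rw [show c+2+1 = c+3 from rfl, h3, hPu, hsq]
    rw [hPu] at hih
    linear_combination (a^2) * hih

lemma newton_base {c : ℕ} (s : Multiset ℝ) (h : Multiset.card s = c + 2) :
    2 * (s.esymm c * s.esymm (c+2)) ≤ s.esymm (c+1) ^ 2 := by
  have hid := key_id c s h
  have hnn : 0 ≤ (s.map (fun x => x^2)).esymm (c+1) := by
    apply esymm_nonneg
    intro x hx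
    obtain ⟨y, _, rfl⟩ := Multiset.mem_map.mp hx
    positivity
  nlinarith [hid, hnn]



lemma exists_shrink (n : ℕ) (s : Multiset ℝ) (hs : Multiset.card s = n + 1) :
    ∃ t : Multiset ℝ, Multiset.card t = n ∧
      ∀ i, i ≤ n → ((n:ℝ)+1) * t.esymm i = ((n:ℝ)+1-(i:ℝ)) * s.esymm i := by
  set p : ℝ[X] := (s.map fun a => X - C a).prod with hp
  have hmonic : p.Monic :=
    monic_multiset_prod_of_monic _ _ (fun a _ => monic_X_sub_C a)
  have hdeg : p.natDegree = n + 1 := by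
    rw [hp, natDegree_multiset_prod_X_sub_C_eq_card, hs]
  have hroots : p.roots = s := roots_multiset_prod_X_sub_C s
  have h1 : n + 1 ≤ Multiset.card (derivative p).roots + 1 := by
    calc n + 1 = Multiset.card p.roots := by rw [hroots, hs]
    _ ≤ _ := p.card_roots_le_derivative
  have hdle : (derivative p).natDegree ≤ n := by
    have := natDegree_derivative_le p; omega
  have h2 : Multiset.card (derivative p).roots ≤ n :=
    le_trans (card_roots' _) hdle
  have hcard : Multiset.card (derivative p).roots = n := by omega
  have hdegd : (derivative p).natDegree = n :=
    le_antisymm hdle (hcard ▸ card_roots' _)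
  have hlead : (derivative p).leadingCoeff = (n:ℝ)+1 := by
    rw [leadingCoeff, hdegd, coeff_derivative]
    have : p.coeff (n + 1) = 1 := by
      have := hmonic.coeff_natDegree; rwa [hdeg] at this
    rw [this]; push_cast; ring
  have hfact := C_leadingCoeff_mul_prod_multiset_X_sub_C (p := derivative p)
    (hcard.trans hdegd.symm)
  refine ⟨(derivative p).roots, hcard, ?_⟩
  intro i hi
  have e1 : (derivative p).coeff (n - i) =
      ((n:ℝ)+1) * ((((derivative p).roots.map fun a => X - C a).prod).coeff (n - i)) := by
    conv_lhs => rw [← hfact]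
    rw [coeff_C_mul, hlead]
  have e2 : (((derivative p).roots.map fun a => X - C a).prod).coeff (n - i) =
      (-1)^i * (derivative p).roots.esymm i := by
    have h := Multiset.prod_X_sub_C_coeff (derivative p).roots
      (k := n - i) (by rw [hcard]; omega)
    rw [hcard, show n - (n - i) = i from by omega] at h
    exact h
  have e3 : (derivative p).coeff (n - i) = p.coeff (n - i + 1) * ((n - i : ℕ)+1 : ℝ) :=
    coeff_derivative p (n - i)
  have e4 : p.coeff (n - i + 1) = (-1)^i * s.esymm i := by
    have h := Multiset.prod_X_sub_C_coeff s (k := n - i + 1) (by rw [hs]; omega)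
    rw [hs, show n + 1 - (n - i + 1) = i from by omega] at h
    rw [hp]
    exact h
  have hcast : ((n - i : ℕ) : ℝ) = (n : ℝ) - i := by
    push_cast [Nat.cast_sub hi]; ring
  have key : ((n:ℝ)+1) * ((-1:ℝ)^i * (derivative p).roots.esymm i) =
      ((-1:ℝ)^i * s.esymm i) * (((n:ℝ) - i) + 1) := by
    rw [← e2, ← e1, e3, e4, hcast]
  have hpow : ((-1:ℝ))^i ≠ 0 := pow_ne_zero _ (by norm_num)
  apply mul_left_cancel₀ hpow
  linear_combination key



lemma newton_weak (j : ℕ) (hj : 1 ≤ j) : ∀ n, j + 1 ≤ n →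
    ∃ A : ℝ, 1 ≤ A ∧ ∀ s : Multiset ℝ, Multiset.card s = n →
      s.esymm (j-1) * s.esymm (j+1) ≤ A * s.esymm j ^ 2 := by
  intro n hn
  induction n, hn using Nat.le_induction with
  | base =>
    refine ⟨1, le_rfl, fun s hs => ?_⟩
    have hb := newton_base s (c := j - 1) (by omega)
    rw [show j - 1 + 2 = j + 1 from by omega, show j - 1 + 1 = j from by omega] at hb
    nlinarith [sq_nonneg (s.esymm j)]
  | succ n hn ih =>
    obtain ⟨A, hA1, hA⟩ := ih
    have hjn : (j : ℝ) + 1 ≤ (n : ℝ) := by exact_mod_cast hn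
    have hd : (0:ℝ) < ((n:ℝ) + 2 - j) * ((n:ℝ) - j) := by nlinarith
    refine ⟨A * ((n:ℝ) + 1 - j)^2 / (((n:ℝ) + 2 - j) * ((n:ℝ) - j)), ?_, ?_⟩
    · rw [le_div_iff₀ hd]
      nlinarith
    · intro s hs
      obtain ⟨t, ht, hrel⟩ := exists_shrink n s hs
      have hAt := hA t ht
      have r1 : ((n:ℝ)+1) * t.esymm (j-1) = ((n:ℝ) + 2 - j) * s.esymm (j-1) := by
        have h := hrel (j-1) (by omega)
        rw [h, show (((j-1 : ℕ)):ℝ) = (j:ℝ) - 1 from by push_cast [Nat.cast_sub hj]; ring]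
        ring
      have r2 : ((n:ℝ)+1) * t.esymm j = ((n:ℝ) + 1 - j) * s.esymm j :=
        hrel j (by omega)
      have r3 : ((n:ℝ)+1) * t.esymm (j+1) = ((n:ℝ) - j) * s.esymm (j+1) := by
        have h := hrel (j+1) (by omega)
        rw [h]; push_cast; ring
      have key : (((n:ℝ) + 2 - j) * s.esymm (j-1)) * (((n:ℝ) - j) * s.esymm (j+1)) ≤
          A * (((n:ℝ) + 1 - j) * s.esymm j)^2 := by
        rw [← r1, ← r2, ← r3]
        nlinarith [hAt, sq_nonneg ((n:ℝ)+1)]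
      rw [div_mul_eq_mul_div, le_div_iff₀ hd]
      linear_combination key




lemma esymm_bridge (n l : ℕ) (lam : Fin n → ℝ) :
    esymm n l lam = ((Finset.univ.val : Multiset (Fin n)).map lam).esymm l :=
  (Finset.esymm_map_val lam Finset.univ l).symm

lemma esymm_zero_eq_one (n : ℕ) (lam : Fin n → ℝ) : esymm n 0 lam = 1 := by
  simp [esymm]


end NewtonAux

open NewtonAux in
/-- Bounds `-B ≤ σ_k(λ)/σ_{k-1}(λ) ≤ C`, with `C` depending only on `n, k, B`,
whenever all `β_l ∈ [0, B]` and `|f(λ)| ≤ B`. -/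
theorem hessian_quotient_bounds_of_fmix_bounded (n k : ℕ) (hk2 : 2 ≤ k) (hkn : k ≤ n)
    (B : ℝ) (hB : 0 ≤ B) :
    ∃ C > 0, ∀ (β : ℕ → ℝ), (∀ l, l ≤ k - 2 → β l ∈ Set.Icc 0 B) →
      ∀ lam ∈ GammaCone n (k-1), |fmix n k β lam| ≤ B →
        -B ≤ esymm n k lam / esymm n (k-1) lam ∧
          esymm n k lam / esymm n (k-1) lam ≤ C := by
  have hnw : ∀ j : ℕ, ∃ A : ℝ, 1 ≤ A ∧ (1 ≤ j → j + 1 ≤ n → ∀ lam : Fin n → ℝ,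
      esymm n (j-1) lam * esymm n (j+1) lam ≤ A * esymm n j lam ^ 2) := by
    intro j
    by_cases hj : 1 ≤ j ∧ j + 1 ≤ n
    · obtain ⟨A, hA1, hA⟩ := newton_weak j hj.1 n hj.2
      refine ⟨A, hA1, fun _ _ lam => ?_⟩
      rw [esymm_bridge, esymm_bridge, esymm_bridge]
      exact hA _ (by simp)
    · exact ⟨1, le_rfl, fun h1 h2 => absurd ⟨h1, h2⟩ hj⟩
  choose A hA1 hAprop using hnw
  set Amax : ℝ := ∏ j ∈ Finset.range (k+1), A j with hAmaxdef
  have hprod1 : ∀ (s : Finset ℕ), (1:ℝ) ≤ ∏ i ∈ s, A i := by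
    intro s
    calc (1:ℝ) = ∏ _i ∈ s, 1 := by simp
      _ ≤ ∏ i ∈ s, A i :=
        Finset.prod_le_prod (fun i _ => zero_le_one) (fun i _ => hA1 i)
  have hAmax1 : 1 ≤ Amax := hprod1 _
  have hAmax0 : 0 < Amax := lt_of_lt_of_le one_pos hAmax1
  have hAj : ∀ j, 1 ≤ j → j ≤ k - 1 → ∀ lam : Fin n → ℝ,
      esymm n (j-1) lam * esymm n (j+1) lam ≤ Amax * esymm n j lam ^ 2 := by
    intro j h1 h2 lam
    have hjA : A j ≤ Amax := by
      rw [hAmaxdef, ← Finset.mul_prod_erase _ _ (Finset.mem_range.mpr (by omega : j < k + 1))]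
      exact le_mul_of_one_le_right (le_trans zero_le_one (hA1 j))
        (hprod1 _)
    calc esymm n (j-1) lam * esymm n (j+1) lam
        ≤ A j * esymm n j lam ^ 2 := hAprop j h1 (by omega) lam
      _ ≤ Amax * esymm n j lam ^ 2 :=
          mul_le_mul_of_nonneg_right hjA (sq_nonneg _)
  have hAQnn : 0 ≤ (↑(k-1) : ℝ) * B * Amax ^ ((k-1)*(k-1)) :=
    mul_nonneg (mul_nonneg (Nat.cast_nonneg _) hB) (le_of_lt (pow_pos hAmax0 _))
  refine ⟨1 + B + (↑(k-1) : ℝ) * B * Amax ^ ((k-1)*(k-1)), by linarith, ?_⟩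
  intro β hβ lam hlam hf
  have hpos : ∀ i, i ≤ k - 1 → 0 < esymm n i lam := by
    intro i hi
    rcases Nat.eq_zero_or_pos i with h0 | h1
    · rw [h0, esymm_zero_eq_one]; norm_num
    · exact hlam i h1 hi
  have hek1 : 0 < esymm n (k-1) lam := hpos _ le_rfl
  set q : ℝ := esymm n k lam / esymm n (k-1) lam with hq
  set S : ℝ := ∑ l ∈ Finset.range (k-1), β l * (esymm n l lam / esymm n (k-1) lam) with hS
  have hfix : fmix n k β lam = q - S := rfl
  have hS0 : 0 ≤ S := by
    apply Finset.sum_nonneg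
    intro l hl
    have hl' : l ≤ k - 2 := by have := Finset.mem_range.mp hl; omega
    exact mul_nonneg (hβ l hl').1
      (le_of_lt (div_pos (hpos l (by omega)) hek1))
  have habs := abs_le.mp hf
  rw [hfix] at habs
  constructor
  · linarith [habs.1]
  · by_cases hq1 : q ≤ 1
    · linarith
    · push_neg at hq1
      have hek : 0 < esymm n k lam := by
        have h0 : 0 < q := lt_trans one_pos hq1
        have h := mul_pos h0 hek1
        rwa [hq, div_mul_cancel₀ _ (ne_of_gt hek1)] at h
      have hposk : ∀ i, i ≤ k → 0 < esymm n i lam := by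
        intro i hi
        rcases Nat.lt_or_ge i k with h | h
        · exact hpos i (by omega)
        · have : i = k := by omega
          rw [this]; exact hek
      have hkk1 : esymm n (k-1) lam ≤ esymm n k lam := by
        have := (one_lt_div hek1).mp hq1
        linarith
      -- the Newton chain estimate
      have chain : ∀ d, d ≤ k - 1 →
          esymm n (k-1-d) lam * esymm n k lam ≤
            Amax ^ d * esymm n (k-d) lam * esymm n (k-1) lam := by
        intro d
        induction d with
        | zero =>
          intro _
          rw [pow_zero, Nat.sub_zero, Nat.sub_zero, one_mul]
          exact le_of_eq (mul_comm _ _)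
        | succ d ihd =>
          intro hd
          have hIH := ihd (by omega)
          set i := k - 1 - d with hidef
          have hi1 : 1 ≤ i := by omega
          have hik : i ≤ k - 1 := by omega
          have hN := hAj i hi1 hik lam
          rw [show k - 1 - (d+1) = i - 1 from by omega,
            show k - (d+1) = i from by omega]
          rw [show k - d = i + 1 from by omega] at hIH
          have p2 : 0 < esymm n i lam := hposk _ (by omega)
          have p3 : 0 < esymm n (i+1) lam := hposk _ (by omega)
          apply le_of_mul_le_mul_right _ (mul_pos p2 p3)
          calc esymm n (i-1) lam * esymm n k lam * (esymm n i lam * esymm n (i+1) lam)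
              = (esymm n (i-1) lam * esymm n (i+1) lam) * (esymm n i lam * esymm n k lam) := by
                ring
            _ ≤ (Amax * esymm n i lam ^ 2) * (Amax ^ d * esymm n (i+1) lam * esymm n (k-1) lam) :=
                mul_le_mul hN hIH (le_of_lt (mul_pos p2 hek))
                  (le_of_lt (mul_pos hAmax0 (pow_pos p2 2)))
            _ = Amax ^ (d+1) * esymm n i lam * esymm n (k-1) lam *
                (esymm n i lam * esymm n (i+1) lam) := by
                rw [pow_succ]; ring
      -- one-step bound
      have step : ∀ j, j ≤ k - 2 →
          esymm n j lam ≤ Amax ^ (k-1) * esymm n (j+1) lam := by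
        intro j hj
        have hd : k - 1 - (k - 1 - j) = j := by omega
        have hc := chain (k-1-j) (by omega)
        rw [hd, show k - (k-1-j) = j + 1 from by omega] at hc
        have h2 : esymm n j lam * esymm n k lam ≤
            Amax ^ (k-1-j) * esymm n (j+1) lam * esymm n k lam := by
          calc esymm n j lam * esymm n k lam
              ≤ Amax ^ (k-1-j) * esymm n (j+1) lam * esymm n (k-1) lam := hc
            _ ≤ Amax ^ (k-1-j) * esymm n (j+1) lam * esymm n k lam := by
                apply mul_le_mul_of_nonneg_left hkk1
                exact le_of_lt (mul_pos (pow_pos hAmax0 _) (hposk _ (by omega)))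
        have h3 := le_of_mul_le_mul_right (by
          calc esymm n j lam * esymm n k lam ≤ _ := h2
          ) hek
        calc esymm n j lam ≤ Amax ^ (k-1-j) * esymm n (j+1) lam := h3
          _ ≤ Amax ^ (k-1) * esymm n (j+1) lam := by
              apply mul_le_mul_of_nonneg_right _ (le_of_lt (hposk _ (by omega)))
              exact pow_le_pow_right₀ hAmax1 (by omega)
      -- full bound on lower esymm's
      have bounded : ∀ d, d ≤ k - 1 →
          esymm n (k-1-d) lam ≤ (Amax ^ (k-1)) ^ d * esymm n (k-1) lam := by
        intro d
        induction d with
        | zero => intro _; simp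
        | succ d ihd =>
          intro hd
          have hIH := ihd (by omega)
          calc esymm n (k-1-(d+1)) lam
              ≤ Amax ^ (k-1) * esymm n (k-1-(d+1)+1) lam := step _ (by omega)
            _ = Amax ^ (k-1) * esymm n (k-1-d) lam := by rw [show k-1-(d+1)+1 = k-1-d from by omega]
            _ ≤ Amax ^ (k-1) * ((Amax ^ (k-1)) ^ d * esymm n (k-1) lam) :=
                mul_le_mul_of_nonneg_left hIH (le_of_lt (pow_pos hAmax0 _))
            _ = (Amax ^ (k-1)) ^ (d+1) * esymm n (k-1) lam := by rw [pow_succ]; ring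
      have bounded' : ∀ l, l ≤ k - 1 →
          esymm n l lam ≤ Amax ^ ((k-1)*(k-1)) * esymm n (k-1) lam := by
        intro l hl
        have hb := bounded (k-1-l) (by omega)
        rw [show k-1-(k-1-l) = l from by omega] at hb
        calc esymm n l lam ≤ (Amax ^ (k-1)) ^ (k-1-l) * esymm n (k-1) lam := hb
          _ ≤ Amax ^ ((k-1)*(k-1)) * esymm n (k-1) lam := by
              apply mul_le_mul_of_nonneg_right _ (le_of_lt hek1)
              rw [← pow_mul]
              exact pow_le_pow_right₀ hAmax1 (by nlinarith [Nat.sub_le (k-1) l])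
      -- bound on S
      have hSle : S ≤ (↑(k-1) : ℝ) * B * Amax ^ ((k-1)*(k-1)) := by
        have hterm : ∀ l ∈ Finset.range (k-1),
            β l * (esymm n l lam / esymm n (k-1) lam) ≤ B * Amax ^ ((k-1)*(k-1)) := by
          intro l hl
          have hl2 : l ≤ k - 2 := by have := Finset.mem_range.mp hl; omega
          have hβl := hβ l hl2
          have hdivle : esymm n l lam / esymm n (k-1) lam ≤ Amax ^ ((k-1)*(k-1)) := by
            rw [div_le_iff₀ hek1]
            exact bounded' l (by omega)
          exact mul_le_mul hβl.2 hdivle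
            (le_of_lt (div_pos (hpos l (by omega)) hek1)) hB
        calc S ≤ ∑ _l ∈ Finset.range (k-1), B * Amax ^ ((k-1)*(k-1)) :=
            Finset.sum_le_sum hterm
          _ = (↑(k-1) : ℝ) * B * Amax ^ ((k-1)*(k-1)) := by
            rw [Finset.sum_const, Finset.card_range, nsmul_eq_mul]; ring
      linarith [habs.2]
end

section
/- Let 2 ≤ k ≤ n and let β_0,…,β_{k−2} be nonnegative real numbers. Then for every λ ∈ Γ_{k−1}, the sum of the partial derivatives of f satisfies Σ_{i=1}^n f_i(λ) ≥ (n−k+1)/k. -/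
/-!
Write `𝟙 = (1, …, 1)`. The sum `∑ᵢ fᵢ(λ)` is the derivative of `f` along `𝟙`, and
`∑ᵢ ∂ᵢσ_m = (n - m + 1) σ_{m-1}`. In terms of the means `E_j = σ_j / C(n, j)`, Newton's inequality
`E_{k-2} E_k ≤ E_{k-1}²` shows that `σ_k / σ_{k-1}` contributes at least `(n - k + 1) / k`; and on
`Γ_{k-1}` the means `E_0, …, E_{k-1}` are positive and log-concave, so `E_l / E_{l-1}` decreases
in `l` and every `σ_l / σ_{k-1}` with `l ≤ k - 2` has a nonpositive derivative along `𝟙`.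

Newton's inequality is proved classically. By Rolle's theorem the derivative of `∏ (X - λᵢ)` has
only real roots, and their means agree with those of the `λᵢ`; this reduces to `n = m + 2`.
Replacing the `λᵢ` by their inverses exchanges `E_j` and `E_{n-j}` up to a common factor, which
reduces further to `m = 0`, the AM-GM inequality for two numbers.
-/

open Finset

theorem Finset.sum_powersetCard_succ_sum_prod_erase {ι R : Type*} [Fintype ι] [DecidableEq ι]
    [CommSemiring R] (m : ℕ) (f : ι → R) :
    ∑ S ∈ powersetCard (m + 1) univ, ∑ i ∈ S, ∏ j ∈ S.erase i, f j
      = (Fintype.card ι - m) • ∑ T ∈ powersetCard m univ, ∏ j ∈ T, f j := by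
  have hcompl : ∀ T ∈ powersetCard m (univ : Finset ι),
      (Fintype.card ι - m) • ∏ j ∈ T, f j = ∑ _i ∈ Tᶜ, ∏ j ∈ T, f j := by
    intro T hT
    rw [sum_const, card_compl, (mem_powersetCard_univ.mp hT)]
  rw [smul_sum, sum_congr rfl hcompl, sum_sigma', sum_sigma']
  refine sum_nbij' (fun x => ⟨x.1.erase x.2, x.2⟩) (fun y => ⟨insert y.2 y.1, y.2⟩)
    ?_ ?_ ?_ ?_ ?_ <;> simp +contextual [card_erase_of_mem, insert_erase]

theorem Finset.sum_powersetCard_prod_eq_prod_mul_sum_prod_inv {ι K : Type*} [Fintype ι]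
    [DecidableEq ι] [Field K] {f : ι → K} (hf : ∀ i, f i ≠ 0) {j : ℕ}
    (hj : j ≤ Fintype.card ι) :
    ∑ S ∈ powersetCard j univ, ∏ i ∈ S, f i
      = (∏ i, f i) * ∑ T ∈ powersetCard (Fintype.card ι - j) univ, ∏ i ∈ T, (f i)⁻¹ := by
  rw [mul_sum]
  refine sum_nbij' compl compl ?_ ?_ ?_ ?_ ?_
  · intro S hS; simp_all [card_compl]
  · intro T hT; simp_all [card_compl]; omega
  · intro S _; exact compl_compl S
  · intro T _; exact compl_compl T
  · intro S _
    rw [← prod_mul_prod_compl S f, prod_inv_distrib, mul_inv_cancel_right₀]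
    exact prod_ne_zero_iff.mpr fun i _ => hf i

theorem sum_fderiv_pi_single_eq {ι : Type*} [Fintype ι] [DecidableEq ι] {F : (ι → ℝ) → ℝ}
    {x : ι → ℝ} {F' : ℝ} (hF : DifferentiableAt ℝ F x)
    (h : HasDerivAt (fun t : ℝ => F (x + t • 1)) F' 0) :
    ∑ i, fderiv ℝ F x (Pi.single i 1) = F' := by
  have hline : HasDerivAt (fun t : ℝ => x + t • (1 : ι → ℝ)) 1 0 := by
    simpa using ((hasDerivAt_id (0 : ℝ)).smul_const (1 : ι → ℝ)).const_add x
  have hF' : HasFDerivAt F (fderiv ℝ F x) (x + (0 : ℝ) • 1) := by simpa using hF.hasFDerivAt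
  rw [← map_sum, univ_sum_single (fun _ => (1 : ℝ))]
  exact (hF'.comp_hasDerivAt (0 : ℝ) hline).unique h

theorem mul_le_mul_of_log_concave {a : ℕ → ℝ} {K : ℕ} (hpos : ∀ j ≤ K, 0 < a j)
    (hlc : ∀ j, j + 2 ≤ K → a j * a (j + 2) ≤ a (j + 1) ^ 2) {i j : ℕ} (hij : i ≤ j)
    (hj : j + 1 ≤ K) : a i * a (j + 1) ≤ a (i + 1) * a j := by
  induction j, hij using Nat.le_induction with
  | base => rw [mul_comm]
  | succ j hij ih =>
    have hj0 := hpos j (by omega)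
    refine le_of_mul_le_mul_left ?_ hj0
    calc a j * (a i * a (j + 1 + 1))
        = a i * (a j * a (j + 2)) := by ring
      _ ≤ a i * a (j + 1) ^ 2 := mul_le_mul_of_nonneg_left (hlc j hj) (hpos i (by omega)).le
      _ = (a i * a (j + 1)) * a (j + 1) := by ring
      _ ≤ (a (i + 1) * a j) * a (j + 1) :=
        mul_le_mul_of_nonneg_right (ih (by omega)) (hpos _ (by omega)).le
      _ = a j * (a (i + 1) * a (j + 1)) := by ring

namespace Polynomial

theorem card_roots_derivative_eq_natDegree {p : ℝ[X]}
    (hp : Multiset.card p.roots = p.natDegree) :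
    Multiset.card (derivative p).roots = (derivative p).natDegree := by
  have := p.card_roots_le_derivative
  have := (derivative p).card_roots'
  rw [natDegree_derivative] at *
  omega

end Polynomial

namespace Multiset

open Polynomial

theorem esymm_card {R : Type*} [CommSemiring R] (s : Multiset R) :
    s.esymm (card s) = s.prod := by
  simp [esymm, powersetCard_self]

theorem esymm_eq_prod_mul_esymm_map_inv {K : Type*} [Field K] {s : Multiset K}
    (hs : (0 : K) ∉ s) {j : ℕ} (hj : j ≤ card s) :
    s.esymm j = s.prod * (s.map (·⁻¹)).esymm (card s - j) := by
  classical
  have hf : ∀ x : s, (x : K) ≠ 0 := fun x hx => hs (hx ▸ coe_mem)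
  have hprod : ∏ x : s, (x : K) = s.prod := by
    rw [Finset.prod_eq_multiset_prod, map_univ_coe]
  have hmap : s.map (·⁻¹) = (Finset.univ : Finset s).val.map fun x : s => (x : K)⁻¹ :=
    (map_univ s _).symm
  conv_lhs => rw [← map_univ_coe s, Finset.esymm_map_val]
  rw [hmap, Finset.esymm_map_val, ← card_coe, ← hprod]
  exact sum_powersetCard_prod_eq_prod_mul_sum_prod_inv hf (by rwa [card_coe])

theorem exists_card_eq_mul_esymm_eq_of_card_eq_succ {s : Multiset ℝ} {e : ℕ}
    (hs : card s = e + 1) :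
    ∃ t : Multiset ℝ, card t = e ∧
      ∀ j ≤ e, ((e : ℝ) + 1) * t.esymm j = ((e + 1 - j : ℕ) : ℝ) * s.esymm j := by
  set p : ℝ[X] := (s.map fun a => X - C a).prod
  have hp_deg : p.natDegree = e + 1 := by rw [natDegree_multiset_prod_X_sub_C_eq_card, hs]
  have hq_deg : (derivative p).natDegree = e := by
    rw [natDegree_derivative, hp_deg, Nat.add_sub_cancel]
  have hq_roots : card (derivative p).roots = (derivative p).natDegree :=
    card_roots_derivative_eq_natDegree (by rw [roots_multiset_prod_X_sub_C, hs, hp_deg])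
  have hq_lc : (derivative p).leadingCoeff = (e : ℝ) + 1 := by
    rw [leadingCoeff_derivative, hp_deg,
      (monic_multiset_prod_of_monic _ _ fun a _ => monic_X_sub_C a).leadingCoeff]
    push_cast; ring
  refine ⟨(derivative p).roots, hq_roots.trans hq_deg, fun j hj => ?_⟩
  have hvieta := coeff_eq_esymm_roots_of_card hq_roots (k := e - j) (by omega)
  rw [coeff_derivative, prod_X_sub_C_coeff s (by omega), hq_lc, hq_deg, hs,
    show e + 1 - (e - j + 1) = j by omega, show e - (e - j) = j by omega] at hvieta
  apply mul_left_cancel₀ (pow_ne_zero j (by norm_num : (-1 : ℝ) ≠ 0))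
  push_cast [Nat.cast_sub hj, show j ≤ e + 1 by omega] at hvieta ⊢
  linear_combination -hvieta

noncomputable def esymmMean (s : Multiset ℝ) (j : ℕ) : ℝ :=
  s.esymm j / (card s).choose j

theorem esymmMean_zero (s : Multiset ℝ) : s.esymmMean 0 = 1 := by
  simp [esymmMean, esymm]

theorem exists_card_eq_esymmMean_eq_of_card_eq_succ {s : Multiset ℝ} {e : ℕ}
    (hs : card s = e + 1) :
    ∃ t : Multiset ℝ, card t = e ∧ ∀ j ≤ e, t.esymmMean j = s.esymmMean j := by
  obtain ⟨t, ht, hrel⟩ := exists_card_eq_mul_esymm_eq_of_card_eq_succ hs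
  refine ⟨t, ht, fun j hj => ?_⟩
  have hchoose : (e.choose j : ℝ) * (e + 1) = (e + 1).choose j * ((e + 1 - j : ℕ) : ℝ) := by
    exact_mod_cast Nat.choose_mul_succ_eq e j
  have hc : (0 : ℝ) < e.choose j := by exact_mod_cast Nat.choose_pos hj
  have hc' : (0 : ℝ) < (e + 1).choose j := by exact_mod_cast Nat.choose_pos (by omega)
  rw [esymmMean, esymmMean, ht, hs, div_eq_div_iff hc.ne' hc'.ne']
  apply mul_left_cancel₀ (show (e : ℝ) + 1 ≠ 0 by positivity)
  linear_combination ((e + 1).choose j : ℝ) * hrel j hj - s.esymm j * hchoose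

theorem exists_card_eq_esymmMean_eq {s : Multiset ℝ} {m : ℕ} (hm : m ≤ card s) :
    ∃ t : Multiset ℝ, card t = m ∧ ∀ j ≤ m, t.esymmMean j = s.esymmMean j := by
  obtain ⟨k, hk⟩ : ∃ k, card s = m + k := ⟨card s - m, by omega⟩
  clear hm
  induction k generalizing s with
  | zero => exact ⟨s, hk, fun _ _ => rfl⟩
  | succ k ih =>
    obtain ⟨u, hu, hsu⟩ := exists_card_eq_esymmMean_eq_of_card_eq_succ (e := m + k) hk
    obtain ⟨t, ht, htu⟩ := ih hu
    exact ⟨t, ht, fun j hj => (htu j hj).trans (hsu j (by omega))⟩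

theorem esymmMean_eq_prod_mul_esymmMean_map_inv {s : Multiset ℝ} (hs : (0 : ℝ) ∉ s) {j : ℕ}
    (hj : j ≤ card s) :
    s.esymmMean j = s.prod * (s.map (·⁻¹)).esymmMean (card s - j) := by
  rw [esymmMean, esymmMean, esymm_eq_prod_mul_esymm_map_inv hs hj, card_map,
    Nat.choose_symm hj, mul_div_assoc]

theorem esymmMean_zero_mul_esymmMean_two_le_sq {s : Multiset ℝ} (hs : 2 ≤ card s) :
    s.esymmMean 0 * s.esymmMean 2 ≤ s.esymmMean 1 ^ 2 := by
  obtain ⟨t, ht, hts⟩ := exists_card_eq_esymmMean_eq hs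
  obtain ⟨a, b, rfl⟩ := card_eq_two.mp ht
  rw [← hts 0 (by norm_num), ← hts 1 (by norm_num), ← hts 2 le_rfl, esymmMean_zero]
  simp only [esymmMean, insert_eq_cons, esymm_pair_one, esymm_pair_two]
  norm_num
  nlinarith [sq_nonneg (a - b)]

theorem esymmMean_mul_esymmMean_le_sq_of_card_eq {s : Multiset ℝ} {m : ℕ}
    (hs : card s = m + 2) :
    s.esymmMean m * s.esymmMean (m + 2) ≤ s.esymmMean (m + 1) ^ 2 := by
  by_cases h0 : (0 : ℝ) ∈ s
  · have hlast : s.esymmMean (m + 2) = 0 := by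
      rw [esymmMean, ← hs, esymm_card, prod_eq_zero h0, zero_div]
    rw [hlast, mul_zero]
    positivity
  · have hinv := esymmMean_zero_mul_esymmMean_two_le_sq (s := s.map (·⁻¹)) (by simp [hs])
    rw [esymmMean_eq_prod_mul_esymmMean_map_inv h0 (by omega),
      esymmMean_eq_prod_mul_esymmMean_map_inv h0 (by omega),
      esymmMean_eq_prod_mul_esymmMean_map_inv h0 (by omega), hs,
      show m + 2 - m = 2 by omega, show m + 2 - (m + 1) = 1 by omega, Nat.sub_self]
    nlinarith [mul_le_mul_of_nonneg_left hinv (sq_nonneg s.prod)]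

theorem esymmMean_mul_esymmMean_le_sq {s : Multiset ℝ} {m : ℕ} (hs : m + 2 ≤ card s) :
    s.esymmMean m * s.esymmMean (m + 2) ≤ s.esymmMean (m + 1) ^ 2 := by
  obtain ⟨t, ht, hts⟩ := exists_card_eq_esymmMean_eq hs
  rw [← hts m (by omega), ← hts (m + 1) (by omega), ← hts (m + 2) le_rfl]
  exact esymmMean_mul_esymmMean_le_sq_of_card_eq ht

end Multiset

theorem esymm_eq_choose_mul_esymmMean (n j : ℕ) (lam : Fin n → ℝ) (hj : j ≤ n) :
    esymm n j lam = n.choose j * (univ.val.map lam).esymmMean j := by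
  have hc : (n.choose j : ℝ) ≠ 0 := by exact_mod_cast (Nat.choose_pos hj).ne'
  rw [Multiset.esymmMean, Finset.esymm_map_val, Multiset.card_map, card_val, card_univ,
    Fintype.card_fin, mul_div_cancel₀ _ hc]
  rfl

noncomputable def esymmDerivOnes (n : ℕ) : ℕ → (Fin n → ℝ) → ℝ
  | 0, _ => 0
  | m + 1, lam => ((n - m : ℕ) : ℝ) * esymm n m lam

theorem hasDerivAt_esymm_add_smul_one (n m : ℕ) (lam : Fin n → ℝ) :
    HasDerivAt (fun t : ℝ => esymm n m (lam + t • 1)) (esymmDerivOnes n m lam) 0 := by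
  cases m with
  | zero => simpa [esymm, esymmDerivOnes] using hasDerivAt_const (0 : ℝ) (1 : ℝ)
  | succ m =>
    have hprod : ∀ S : Finset (Fin n), HasDerivAt (fun t : ℝ => ∏ i ∈ S, (lam + t • 1) i)
        (∑ i ∈ S, ∏ j ∈ S.erase i, lam j) 0 := fun S => by
      simpa using HasDerivAt.fun_finsetProd (u := S) (x := (0 : ℝ))
        (fun i _ => (hasDerivAt_id (0 : ℝ)).const_add (lam i))
    have := HasDerivAt.fun_sum (u := powersetCard (m + 1) univ) (fun S _ => hprod S)
    rwa [sum_powersetCard_succ_sum_prod_erase, Fintype.card_fin, nsmul_eq_mul] at this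

theorem div_mul_esymm_sq_le {n k : ℕ} (hk : 2 ≤ k) (hkn : k ≤ n) (lam : Fin n → ℝ) :
    ((n : ℝ) - k + 1) / k * esymm n (k - 1) lam ^ 2
      ≤ esymmDerivOnes n k lam * esymm n (k - 1) lam
        - esymm n k lam * esymmDerivOnes n (k - 1) lam := by
  obtain ⟨j, rfl⟩ : ∃ j, k = j + 2 := ⟨k - 2, by omega⟩
  have hnewton := Multiset.esymmMean_mul_esymmMean_le_sq (s := univ.val.map lam) (m := j)
    (by simpa using hkn)
  have hc₁ : (n.choose (j + 1) : ℝ) * (j + 1) = n.choose j * ((n - j : ℕ) : ℝ) := by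
    exact_mod_cast Nat.choose_succ_right_eq n j
  have hc₂ : (n.choose (j + 2) : ℝ) * (j + 2) = n.choose (j + 1) * ((n - (j + 1) : ℕ) : ℝ) := by
    exact_mod_cast Nat.choose_succ_right_eq n (j + 1)
  have hN : (n : ℝ) - ((j + 2 : ℕ) : ℝ) + 1 = ((n - (j + 1) : ℕ) : ℝ) := by
    push_cast [Nat.cast_sub (show j + 1 ≤ n by omega)]; ring
  simp only [esymmDerivOnes, show j + 2 - 1 = j + 1 by omega, hN,
    esymm_eq_choose_mul_esymmMean n _ lam (show j ≤ n by omega),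
    esymm_eq_choose_mul_esymmMean n _ lam (show j + 1 ≤ n by omega),
    esymm_eq_choose_mul_esymmMean n _ lam hkn]
  set E := (univ.val.map lam).esymmMean
  rw [div_mul_eq_mul_div, div_le_iff₀ (by positivity)]
  have hpos : (0 : ℝ) ≤ ((j : ℝ) + 1) * ((n - (j + 1) : ℕ) : ℝ) * (n.choose (j + 1)) ^ 2 := by
    positivity
  push_cast
  linear_combination mul_le_mul_of_nonneg_left hnewton hpos
    + E j * E (j + 2) * ((n - j : ℕ) : ℝ) * n.choose j * hc₂
    - E j * E (j + 2) * n.choose (j + 1) * ((n - (j + 1) : ℕ) : ℝ) * hc₁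

theorem esymm_eq_zero_of_lt {n m : ℕ} (h : n < m) (lam : Fin n → ℝ) : esymm n m lam = 0 := by
  simp [esymm, powersetCard_eq_empty.mpr (show (univ : Finset (Fin n)).card < m by simpa)]

theorem esymmDerivOnes_mul_esymm_le {n K : ℕ} {lam : Fin n → ℝ}
    (hpos : ∀ j ≤ K, 0 < esymm n j lam) {l : ℕ} (hl : l + 1 ≤ K) :
    esymmDerivOnes n l lam * esymm n K lam ≤ esymm n l lam * esymmDerivOnes n K lam := by
  obtain ⟨j, rfl⟩ : ∃ j, K = j + 1 := ⟨K - 1, by omega⟩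
  have hKn : j + 1 ≤ n := by
    by_contra h
    exact (hpos _ le_rfl).ne' (esymm_eq_zero_of_lt (by omega) lam)
  cases l with
  | zero =>
    simp only [esymmDerivOnes, zero_mul]
    exact mul_nonneg (hpos 0 (by omega)).le
      (mul_nonneg (Nat.cast_nonneg _) (hpos j (by omega)).le)
  | succ i =>
    set E := (univ.val.map lam).esymmMean
    have hσ : ∀ m ≤ n, esymm n m lam = n.choose m * E m := fun m hm =>
      esymm_eq_choose_mul_esymmMean n m lam hm
    have hEpos : ∀ m ≤ j + 1, 0 < E m := fun m hm => by
      have := hpos m hm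
      rw [hσ m (by omega)] at this
      exact pos_of_mul_pos_right this (Nat.cast_nonneg _)
    have hratio : E i * E (j + 1) ≤ E (i + 1) * E j :=
      mul_le_mul_of_log_concave hEpos (fun m hm => Multiset.esymmMean_mul_esymmMean_le_sq
        (by simpa using (show m + 2 ≤ n by omega))) (by omega) le_rfl
    have hc_i : (n.choose (i + 1) : ℝ) * (i + 1) = n.choose i * ((n - i : ℕ) : ℝ) := by
      exact_mod_cast Nat.choose_succ_right_eq n i
    have hc_j : (n.choose (j + 1) : ℝ) * (j + 1) = n.choose j * ((n - j : ℕ) : ℝ) := by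
      exact_mod_cast Nat.choose_succ_right_eq n j
    have hij : (i : ℝ) ≤ j := by exact_mod_cast (show i ≤ j by omega)
    simp only [esymmDerivOnes, hσ i (by omega), hσ (i + 1) (by omega), hσ j (by omega),
      hσ (j + 1) (by omega)]
    have hcc : (0 : ℝ) ≤ n.choose (i + 1) * n.choose (j + 1) := by positivity
    have h₁ := mul_le_mul_of_nonneg_left hratio
      (mul_nonneg hcc (show (0 : ℝ) ≤ i + 1 by positivity))
    have h₂ := mul_le_mul_of_nonneg_left (sub_nonneg.mpr hij)
      (mul_nonneg hcc (mul_pos (hEpos (i + 1) (by omega)) (hEpos j (by omega))).le)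
    linear_combination h₁ + h₂ - E i * E (j + 1) * n.choose (j + 1) * hc_i
      + E (i + 1) * E j * n.choose (i + 1) * hc_j
@[fun_prop]
theorem differentiable_esymm (n m : ℕ) : Differentiable ℝ (esymm n m) := by
  unfold esymm
  fun_prop

theorem differentiableAt_fmix (n k : ℕ) (β : ℕ → ℝ) {lam : Fin n → ℝ}
    (h : esymm n (k - 1) lam ≠ 0) : DifferentiableAt ℝ (fmix n k β) lam := by
  unfold fmix
  fun_prop (disch := exact h)

theorem hasDerivAt_fmix_add_smul_one (n k : ℕ) (β : ℕ → ℝ) {lam : Fin n → ℝ}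
    (h : esymm n (k - 1) lam ≠ 0) :
    HasDerivAt (fun t : ℝ => fmix n k β (lam + t • 1))
      ((esymmDerivOnes n k lam * esymm n (k - 1) lam
          - esymm n k lam * esymmDerivOnes n (k - 1) lam) / esymm n (k - 1) lam ^ 2
        - ∑ l ∈ range (k - 1), β l * ((esymmDerivOnes n l lam * esymm n (k - 1) lam
          - esymm n l lam * esymmDerivOnes n (k - 1) lam) / esymm n (k - 1) lam ^ 2)) 0 := by
  have h0 : esymm n (k - 1) (lam + (0 : ℝ) • 1) ≠ 0 := by simpa using h
  have hq : ∀ m, HasDerivAt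
      (fun t : ℝ => esymm n m (lam + t • 1) / esymm n (k - 1) (lam + t • 1))
      ((esymmDerivOnes n m lam * esymm n (k - 1) lam
          - esymm n m lam * esymmDerivOnes n (k - 1) lam) / esymm n (k - 1) lam ^ 2) 0 := by
    intro m
    simpa using (hasDerivAt_esymm_add_smul_one n m lam).fun_div
      (hasDerivAt_esymm_add_smul_one n (k - 1) lam) h0
  exact (hq k).sub (HasDerivAt.fun_sum fun l _ => (hq l).const_mul (β l))

/-- Lower bound for the trace of the linearized operator:
`∑ᵢ fᵢ(λ) ≥ (n-k+1)/k` on `Γ_{k-1}`. -/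
theorem fmix_sum_deriv_lower_bound (n k : ℕ) (hk2 : 2 ≤ k) (hkn : k ≤ n)
    (β : ℕ → ℝ) (hβ : ∀ l, l ≤ k - 2 → 0 ≤ β l)
    (lam : Fin n → ℝ) (hlam : lam ∈ GammaCone n (k-1)) :
    ((n : ℝ) - (k : ℝ) + 1) / (k : ℝ)
      ≤ ∑ i : Fin n, fderiv ℝ (fmix n k β) lam (Pi.single i 1) := by
  have hpos : ∀ j ≤ k - 1, 0 < esymm n j lam := fun j hjk => by
    rcases j.eq_zero_or_pos with rfl | hj
    · simp [esymm]
    · exact hlam j hj hjk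
  have hσ : 0 < esymm n (k - 1) lam := hpos _ le_rfl
  rw [sum_fderiv_pi_single_eq (differentiableAt_fmix n k β hσ.ne')
    (hasDerivAt_fmix_add_smul_one n k β hσ.ne')]
  have hlead : ((n : ℝ) - k + 1) / k ≤ (esymmDerivOnes n k lam * esymm n (k - 1) lam
      - esymm n k lam * esymmDerivOnes n (k - 1) lam) / esymm n (k - 1) lam ^ 2 := by
    rw [le_div_iff₀ (by positivity)]
    exact div_mul_esymm_sq_le hk2 hkn lam
  have hlower : ∑ l ∈ range (k - 1), β l * ((esymmDerivOnes n l lam * esymm n (k - 1) lam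
      - esymm n l lam * esymmDerivOnes n (k - 1) lam) / esymm n (k - 1) lam ^ 2) ≤ 0 := by
    refine sum_nonpos fun l hl => ?_
    have hlk : l + 1 ≤ k - 1 := by rw [mem_range] at hl; omega
    exact mul_nonpos_of_nonneg_of_nonpos (hβ l (by omega)) (div_nonpos_of_nonpos_of_nonneg
      (sub_nonpos.mpr (esymmDerivOnes_mul_esymm_le hpos hlk)) (sq_nonneg _))
  linarith
end

section
/- Let 2 ≤ k ≤ n. The function λ ↦ σ_k(λ)/σ_{k−1}(λ) is concave on the cone Γ_{k−1}. -/
open Finset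

namespace HQ

variable {ι : Type*} [DecidableEq ι]

/-- Elementary symmetric function of degree `j` in the variables indexed by `s`. -/
noncomputable def ES (j : ℕ) (s : Finset ι) (lam : ι → ℝ) : ℝ :=
  ∑ t ∈ Finset.powersetCard j s, ∏ i ∈ t, lam i

omit [DecidableEq ι] in
@[simp] lemma ES_zero (s : Finset ι) (lam : ι → ℝ) : ES 0 s lam = 1 := by simp [ES]

omit [DecidableEq ι] in
lemma ES_congr {j : ℕ} {s : Finset ι} {f g : ι → ℝ} (h : ∀ i ∈ s, f i = g i) :
    ES j s f = ES j s g := by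
  refine sum_congr rfl fun t ht => prod_congr rfl fun i hi => h i ?_
  exact (mem_powersetCard.1 ht).1 hi

omit [DecidableEq ι] in
lemma ES_smul {j : ℕ} {s : Finset ι} (c : ℝ) (lam : ι → ℝ) :
    ES j s (c • lam) = c ^ j * ES j s lam := by
  rw [ES, ES, Finset.mul_sum]
  refine sum_congr rfl fun t ht => ?_
  have : ∏ i ∈ t, (c • lam) i = c ^ t.card * ∏ i ∈ t, lam i := by
    rw [← Finset.prod_const, ← Finset.prod_mul_distrib]
    rfl
  rw [this, (mem_powersetCard.1 ht).2]

lemma ES_insert {j : ℕ} {s : Finset ι} {i : ι} (hi : i ∉ s) (lam : ι → ℝ) :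
    ES (j+1) (insert i s) lam = ES (j+1) s lam + lam i * ES j s lam := by
  have hd : Disjoint (powersetCard (j+1) s) ((powersetCard j s).image (insert i)) := by
    rw [Finset.disjoint_right]
    intro u hu hu'
    obtain ⟨t, ht, rfl⟩ := Finset.mem_image.1 hu
    exact hi ((mem_powersetCard.1 hu').1 (Finset.mem_insert_self i t))
  have hinj : ∀ t₁ ∈ powersetCard j s, ∀ t₂ ∈ powersetCard j s,
      insert i t₁ = insert i t₂ → t₁ = t₂ := by
    intro t₁ h₁ t₂ h₂ he
    have hi₁ : i ∉ t₁ := fun h => hi ((mem_powersetCard.1 h₁).1 h)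
    have hi₂ : i ∉ t₂ := fun h => hi ((mem_powersetCard.1 h₂).1 h)
    rw [← Finset.erase_insert hi₁, ← Finset.erase_insert hi₂, he]
  rw [ES, Finset.powersetCard_succ_insert hi, Finset.sum_union hd, Finset.sum_image hinj]
  congr 1
  rw [ES, Finset.mul_sum]
  refine sum_congr rfl fun t ht => ?_
  rw [Finset.prod_insert (fun h => hi ((mem_powersetCard.1 ht).1 h))]

lemma ES_erase {j : ℕ} {s : Finset ι} {i : ι} (hi : i ∈ s) (lam : ι → ℝ) :
    ES (j+1) s lam = ES (j+1) (s.erase i) lam + lam i * ES j (s.erase i) lam := by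
  conv_lhs => rw [← Finset.insert_erase hi]
  exact ES_insert (Finset.notMem_erase i s) lam

lemma ES_sum_erase (j : ℕ) (s : Finset ι) (lam : ι → ℝ) :
    ∑ i ∈ s, lam i * ES j (s.erase i) lam = ((j : ℝ) + 1) * ES (j+1) s lam := by
  have L : ∑ i ∈ s, lam i * ES j (s.erase i) lam
      = ∑ x ∈ s.sigma (fun i => powersetCard j (s.erase i)), ∏ a ∈ insert x.1 x.2, lam a := by
    rw [Finset.sum_sigma]
    refine sum_congr rfl fun i _ => ?_
    rw [ES, Finset.mul_sum]
    refine sum_congr rfl fun t ht => ?_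
    rw [Finset.prod_insert (fun h => Finset.notMem_erase i s ((mem_powersetCard.1 ht).1 h))]
  have R : ((j : ℝ) + 1) * ES (j+1) s lam
      = ∑ y ∈ (powersetCard (j+1) s).sigma (fun u => u), ∏ a ∈ y.1, lam a := by
    rw [Finset.sum_sigma, ES, Finset.mul_sum]
    refine sum_congr rfl fun u hu => ?_
    dsimp only
    rw [Finset.sum_const, nsmul_eq_mul, (mem_powersetCard.1 hu).2]
    push_cast
    ring
  rw [L, R]
  refine Finset.sum_bij' (fun x _ => (⟨insert x.1 x.2, x.1⟩ : (_ : Finset ι) × ι))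
    (fun y _ => (⟨y.2, y.1.erase y.2⟩ : (_ : ι) × Finset ι)) ?_ ?_ ?_ ?_ ?_
  · rintro ⟨i, t⟩ hx
    rw [Finset.mem_sigma] at hx ⊢
    obtain ⟨his, ht⟩ := hx
    obtain ⟨hsub, hcard⟩ := mem_powersetCard.1 ht
    have hit : i ∉ t := fun h => Finset.notMem_erase i s (hsub h)
    refine ⟨mem_powersetCard.2 ⟨?_, ?_⟩, Finset.mem_insert_self i t⟩
    · exact Finset.insert_subset his (hsub.trans (Finset.erase_subset i s))
    · rw [Finset.card_insert_of_notMem hit, hcard]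
  · rintro ⟨u, i⟩ hy
    rw [Finset.mem_sigma] at hy ⊢
    obtain ⟨hu, hiu⟩ := hy
    obtain ⟨hsub, hcard⟩ := mem_powersetCard.1 hu
    refine ⟨hsub hiu, mem_powersetCard.2 ⟨?_, ?_⟩⟩
    · exact Finset.erase_subset_erase i hsub
    · rw [Finset.card_erase_of_mem hiu, hcard]
      omega
  · rintro ⟨i, t⟩ hx
    rw [Finset.mem_sigma] at hx
    have hit : i ∉ t := fun h =>
      Finset.notMem_erase i s ((mem_powersetCard.1 hx.2).1 h)
    simp [Finset.erase_insert hit]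
  · rintro ⟨u, i⟩ hy
    rw [Finset.mem_sigma] at hy
    simp [Finset.insert_erase hy.2]
  · rintro ⟨i, t⟩ _
    rfl

/-- Membership in the Gårding-type cone for the variables indexed by `s`. -/
def Gmem (m : ℕ) (s : Finset ι) (lam : ι → ℝ) : Prop :=
  ∀ j : ℕ, 1 ≤ j → j ≤ m → 0 < ES j s lam

/-- The quotient `σ_{m+1}/σ_m` on the variables indexed by `s`. -/
noncomputable def Qf (m : ℕ) (s : Finset ι) (lam : ι → ℝ) : ℝ :=
  ES (m+1) s lam / ES m s lam

omit [DecidableEq ι] in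
lemma Gmem_mono {m m' : ℕ} {s : Finset ι} {lam : ι → ℝ} (h : m' ≤ m)
    (hg : Gmem m s lam) : Gmem m' s lam :=
  fun j h1 h2 => hg j h1 (h2.trans h)

omit [DecidableEq ι] in
lemma ES_pos_of_Gmem {m : ℕ} {s : Finset ι} {lam : ι → ℝ} (hg : Gmem m s lam) :
    0 < ES m s lam := by
  cases m with
  | zero => simp
  | succ m => exact hg (m+1) (by omega) le_rfl

omit [DecidableEq ι] in
lemma Gmem_smul {m : ℕ} {s : Finset ι} {lam : ι → ℝ} {c : ℝ} (hc : 0 < c)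
    (hg : Gmem m s lam) : Gmem m s (c • lam) := by
  intro j h1 h2
  rw [ES_smul]
  exact mul_pos (pow_pos hc j) (hg j h1 h2)

omit [DecidableEq ι] in
lemma Qf_smul {m : ℕ} {s : Finset ι} {lam : ι → ℝ} {c : ℝ} (hc : c ≠ 0) :
    Qf m s (c • lam) = c * Qf m s lam := by
  unfold Qf
  rw [ES_smul, ES_smul, pow_succ, mul_assoc, mul_div_mul_left _ _ (pow_ne_zero m hc),
    mul_div_assoc]

omit [DecidableEq ι] in
lemma Qf_pos {m : ℕ} {s : Finset ι} {lam : ι → ℝ} (hg : Gmem (m+1) s lam) :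
    0 < Qf m s lam :=
  div_pos (hg (m+1) (by omega) le_rfl) (ES_pos_of_Gmem (Gmem_mono (by omega) hg))

/-- parallel-sum function `h(a,b) = ab/(a+b)` -/
noncomputable def hfun (a b : ℝ) : ℝ := a * b / (a + b)

lemma hfun_superadd {a b c d : ℝ} (h1 : 0 < a + b) (h2 : 0 < c + d) :
    hfun a b + hfun c d ≤ hfun (a + c) (b + d) := by
  unfold hfun
  rw [div_add_div _ _ h1.ne' h2.ne',
    div_le_div_iff₀ (mul_pos h1 h2) (by linarith : (0:ℝ) < a + c + (b + d))]
  nlinarith [sq_nonneg (a*d - b*c)]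

lemma hfun_mono {a b b' : ℝ} (h1 : 0 < a + b') (hb : b' ≤ b) : hfun a b' ≤ hfun a b := by
  unfold hfun
  have h2 : (0:ℝ) < a + b := by linarith
  rw [div_le_div_iff₀ h1 h2]
  nlinarith [mul_nonneg (sq_nonneg a) (sub_nonneg.2 hb)]

lemma add_Qf_eq {m : ℕ} {s : Finset ι} {lam : ι → ℝ} {i : ι} (hi : i ∈ s)
    (hEi : 0 < ES m (s.erase i) lam) :
    lam i + Qf m (s.erase i) lam = ES (m+1) s lam / ES m (s.erase i) lam := by
  rw [Qf, eq_div_iff hEi.ne', add_mul, div_mul_cancel₀ _ hEi.ne', ES_erase hi lam]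
  ring

lemma hfun_Qf_eq {m : ℕ} {s : Finset ι} {lam : ι → ℝ} {i : ι} (hi : i ∈ s)
    (hEi : 0 < ES m (s.erase i) lam) (hS : 0 < ES (m+1) s lam) :
    hfun (lam i) (Qf m (s.erase i) lam)
      = lam i * ES (m+1) (s.erase i) lam / ES (m+1) s lam := by
  unfold hfun
  rw [add_Qf_eq hi hEi, Qf]
  field_simp

lemma Qf_succ_eq_sum {m : ℕ} {s : Finset ι} {lam : ι → ℝ}
    (hlam : Gmem (m+1) s lam)
    (hE : ∀ i ∈ s, 0 < ES m (s.erase i) lam) :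
    ((m : ℝ) + 2) * Qf (m+1) s lam = ∑ i ∈ s, hfun (lam i) (Qf m (s.erase i) lam) := by
  have hS : 0 < ES (m+1) s lam := hlam (m+1) (by omega) le_rfl
  have key : ∑ i ∈ s, hfun (lam i) (Qf m (s.erase i) lam)
      = (∑ i ∈ s, lam i * ES (m+1) (s.erase i) lam) / ES (m+1) s lam := by
    rw [Finset.sum_div]
    exact sum_congr rfl fun i hi => hfun_Qf_eq hi (hE i hi) hS
  rw [key, ES_sum_erase (m+1) s lam, Qf]
  push_cast
  ring

/-- The main simultaneous induction. -/
theorem master (m : ℕ) :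
    (∀ (s : Finset ι) (lam mu : ι → ℝ) (a b : ℝ), 0 ≤ a → 0 ≤ b → 0 < a + b →
      Gmem m s lam → Gmem m s mu → Gmem m s (a • lam + b • mu))
    ∧ (∀ (s : Finset ι) (lam mu : ι → ℝ), Gmem m s lam → Gmem m s mu →
      Qf m s lam + Qf m s mu ≤ Qf m s (lam + mu))
    ∧ (∀ (s : Finset ι) (lam : ι → ℝ) (i : ι), i ∈ s → Gmem m s lam →
      Gmem (m - 1) (s.erase i) lam) := by
  induction m with
  | zero =>
    refine ⟨fun s lam mu a b _ _ _ _ _ j h1 h2 => absurd (h1.trans h2) (by omega),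
      fun s lam mu _ _ => le_of_eq ?_, fun s lam i _ _ j h1 h2 => absurd (h1.trans h2) (by omega)⟩
    unfold Qf
    simp only [ES_zero, div_one]
    simp only [ES, zero_add, Finset.powersetCard_one, Finset.sum_map,
      Function.Embedding.coeFn_mk, Finset.prod_singleton, Pi.add_apply]
    rw [← Finset.sum_add_distrib]
  | succ m IH =>
    obtain ⟨IHconv, IHadd, IHcasc⟩ := IH
    -- Convexity (cone form) at level m+1
    have conv' : ∀ (s : Finset ι) (lam mu : ι → ℝ) (a b : ℝ), 0 ≤ a → 0 ≤ b → 0 < a + b →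
        Gmem (m+1) s lam → Gmem (m+1) s mu → Gmem (m+1) s (a • lam + b • mu) := by
      intro s lam mu a b ha hb hab hlam hmu
      intro j hj1 hj2
      rcases Nat.lt_or_ge j (m+1) with hjm | hjm
      · exact IHconv s lam mu a b ha hb hab (Gmem_mono (by omega) hlam)
          (Gmem_mono (by omega) hmu) j hj1 (by omega)
      · have hj : j = m + 1 := by omega
        subst hj
        rcases eq_or_ne a 0 with rfl | hane
        · have hb' : 0 < b := by simpa using hab
          rw [zero_smul, zero_add, ES_smul]
          exact mul_pos (pow_pos hb' _) (hmu (m+1) (by omega) le_rfl)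
        rcases eq_or_ne b 0 with rfl | hbne
        · have ha' : 0 < a := lt_of_le_of_ne ha (Ne.symm hane)
          rw [zero_smul, add_zero, ES_smul]
          exact mul_pos (pow_pos ha' _) (hlam (m+1) (by omega) le_rfl)
        · have ha' : 0 < a := lt_of_le_of_ne ha (Ne.symm hane)
          have hb' : 0 < b := lt_of_le_of_ne hb (Ne.symm hbne)
          have hw : Gmem m s (a • lam + b • mu) :=
            IHconv s lam mu a b ha hb hab (Gmem_mono (by omega) hlam) (Gmem_mono (by omega) hmu)
          have hQ : Qf m s (a • lam) + Qf m s (b • mu) ≤ Qf m s (a • lam + b • mu) :=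
            IHadd s _ _ (Gmem_smul ha' (Gmem_mono (by omega) hlam))
              (Gmem_smul hb' (Gmem_mono (by omega) hmu))
          rw [Qf_smul ha'.ne', Qf_smul hb'.ne'] at hQ
          have hQl : 0 < Qf m s lam := Qf_pos hlam
          have hQm : 0 < Qf m s mu := Qf_pos hmu
          have hQw : 0 < Qf m s (a • lam + b • mu) := by
            have : 0 < a * Qf m s lam + b * Qf m s mu := by positivity
            linarith
          have hESw : 0 < ES m s (a • lam + b • mu) := ES_pos_of_Gmem hw
          have : ES (m+1) s (a • lam + b • mu)
              = Qf m s (a • lam + b • mu) * ES m s (a • lam + b • mu) := by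
            rw [Qf, div_mul_cancel₀ _ hESw.ne']
          rw [this]
          exact mul_pos hQw hESw
    -- Cascade at level m+1
    have casc' : ∀ (s : Finset ι) (lam : ι → ℝ) (i : ι), i ∈ s → Gmem (m+1) s lam →
        Gmem m (s.erase i) lam := by
      intro s lam i hi hlam
      intro j hj1 hj2
      rcases Nat.lt_or_ge j m with hjm | hjm
      · have := IHcasc s lam i hi (Gmem_mono (by omega) hlam)
        exact this j hj1 (by omega)
      · have hj : j = m := by omega
        subst hj
        -- here j = m ≥ 1
        obtain ⟨M, rfl⟩ : ∃ M, j = M + 1 := ⟨j - 1, by omega⟩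
        by_contra hBpos
        push_neg at hBpos
        set E := s.erase i with hE
        set A := ES (M+2) E lam with hA
        set B := ES (M+1) E lam with hB
        set D := ES M E lam with hD
        have hGE : Gmem M E lam := by
          have := IHcasc s lam i hi (Gmem_mono (by omega) hlam)
          simpa using this
        have hDpos : 0 < D := ES_pos_of_Gmem hGE
        set x := lam i with hx
        -- the deformation ρ t
        set ρ : ℝ → ι → ℝ := fun t => Function.update lam i (lam i + t) with hρ
        have hρE : ∀ (t : ℝ) (j : ℕ), ES j E (ρ t) = ES j E lam := by
          intro t j
          refine ES_congr fun a ha => ?_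
          exact Function.update_of_ne (Finset.ne_of_mem_erase ha) _ _
        have hρi : ∀ t : ℝ, ρ t i = x + t := fun t => Function.update_self _ _ _
        have hexp : ∀ (t : ℝ) (j : ℕ), ES (j+1) s (ρ t) = ES (j+1) E lam + (x + t) * ES j E lam := by
          intro t j
          rw [ES_erase hi (ρ t), hρE, hρE, hρi]
        have hexp0 : ∀ j : ℕ, ES (j+1) s lam = ES (j+1) E lam + x * ES j E lam := by
          intro j
          exact ES_erase hi lam
        have hEnonneg : ∀ j : ℕ, j ≤ M → 0 ≤ ES j E lam := by
          intro j hj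
          cases j with
          | zero => simp
          | succ j' => exact (hGE (j'+1) (by omega) hj).le
        have hGm : ∀ t : ℝ, 0 ≤ t → Gmem (M+1) s (ρ t) := by
          intro t ht j hj1 hj2
          obtain ⟨j', rfl⟩ : ∃ j', j = j' + 1 := ⟨j - 1, by omega⟩
          rw [hexp t j']
          have h1 : 0 < ES (j'+1) s lam := hlam (j'+1) (by omega) (by omega)
          rw [hexp0 j'] at h1
          have h2 : 0 ≤ ES j' E lam := hEnonneg j' (by omega)
          nlinarith
        -- three-point concavity data
        have hkey := IHadd s (ρ 0) (ρ 2) (hGm 0 le_rfl) (hGm 2 (by norm_num))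
        have hsum : ρ 0 + ρ 2 = (2:ℝ) • ρ 1 := by
          funext a
          rcases eq_or_ne a i with rfl | hne
          · simp only [Pi.add_apply, Pi.smul_apply, hρ, Function.update_self, smul_eq_mul]
            ring
          · simp only [Pi.add_apply, Pi.smul_apply, hρ, Function.update_of_ne hne, smul_eq_mul]
            ring
        rw [hsum, Qf_smul (two_ne_zero)] at hkey
        -- numeric values
        have hval : ∀ t : ℝ, Qf (M+1) s (ρ t) = (A + (x+t) * B) / (B + (x+t) * D) := by
          intro t
          rw [Qf, hexp t (M+1), hexp t M, ← hA, ← hB, ← hD]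
        have hp : ∀ t : ℝ, 0 ≤ t → 0 < B + (x+t) * D := by
          intro t ht
          have := hGm t ht (M+1) (by omega) le_rfl
          rw [hexp t M, ← hB, ← hD] at this
          exact this
        have hp0 := hp 0 le_rfl
        have hp1 := hp 1 (by norm_num)
        have hp2 := hp 2 (by norm_num)
        have hN0 : 0 < A + x * B := by
          have := hlam (M+2) (by omega) le_rfl
          rw [hexp0 (M+1), ← hA, ← hB] at this
          exact this
        rw [hval 0, hval 1, hval 2] at hkey
        have hc : A * D - B^2 ≤ 0 := by
          rw [div_add_div _ _ hp0.ne' hp2.ne', ← mul_div_assoc,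
            div_le_div_iff₀ (mul_pos hp0 hp2) hp1] at hkey
          nlinarith [hkey, hDpos]
        nlinarith [mul_pos hN0 hDpos, mul_nonpos_of_nonneg_of_nonpos hp0.le hBpos, hc]
    -- Superadditivity at level m+1
    have add' : ∀ (s : Finset ι) (lam mu : ι → ℝ), Gmem (m+1) s lam → Gmem (m+1) s mu →
        Qf (m+1) s lam + Qf (m+1) s mu ≤ Qf (m+1) s (lam + mu) := by
      intro s lam mu hlam hmu
      have hnu : Gmem (m+1) s (lam + mu) := by
        have := conv' s lam mu 1 1 zero_le_one zero_le_one (by norm_num) hlam hmu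
        simpa [one_smul] using this
      have hEl : ∀ i ∈ s, 0 < ES m (s.erase i) lam :=
        fun i hi => ES_pos_of_Gmem (casc' s lam i hi hlam)
      have hEm : ∀ i ∈ s, 0 < ES m (s.erase i) mu :=
        fun i hi => ES_pos_of_Gmem (casc' s mu i hi hmu)
      have hEn : ∀ i ∈ s, 0 < ES m (s.erase i) (lam + mu) :=
        fun i hi => ES_pos_of_Gmem (casc' s (lam + mu) i hi hnu)
      have bl := Qf_succ_eq_sum hlam hEl
      have bm := Qf_succ_eq_sum hmu hEm
      have bn := Qf_succ_eq_sum hnu hEn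
      have hsum : ∑ i ∈ s, hfun (lam i) (Qf m (s.erase i) lam)
            + ∑ i ∈ s, hfun (mu i) (Qf m (s.erase i) mu)
          ≤ ∑ i ∈ s, hfun ((lam + mu) i) (Qf m (s.erase i) (lam + mu)) := by
        rw [← Finset.sum_add_distrib]
        refine Finset.sum_le_sum fun i hi => ?_
        have hl : Gmem m (s.erase i) lam := casc' s lam i hi hlam
        have hm : Gmem m (s.erase i) mu := casc' s mu i hi hmu
        have hbsum : Qf m (s.erase i) lam + Qf m (s.erase i) mu
            ≤ Qf m (s.erase i) (lam + mu) := IHadd (s.erase i) lam mu hl hm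
        have hal : 0 < lam i + Qf m (s.erase i) lam := by
          rw [add_Qf_eq hi (hEl i hi)]
          exact div_pos (hlam (m+1) (by omega) le_rfl) (hEl i hi)
        have ham : 0 < mu i + Qf m (s.erase i) mu := by
          rw [add_Qf_eq hi (hEm i hi)]
          exact div_pos (hmu (m+1) (by omega) le_rfl) (hEm i hi)
        calc hfun (lam i) (Qf m (s.erase i) lam) + hfun (mu i) (Qf m (s.erase i) mu)
            ≤ hfun (lam i + mu i) (Qf m (s.erase i) lam + Qf m (s.erase i) mu) :=
              hfun_superadd hal ham
          _ ≤ hfun ((lam + mu) i) (Qf m (s.erase i) (lam + mu)) := by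
              rw [Pi.add_apply]
              exact hfun_mono (by linarith) hbsum
      rw [← bl, ← bm, ← bn] at hsum
      have hm2 : (0:ℝ) < (m : ℝ) + 2 := by positivity
      nlinarith [hsum]
    exact ⟨conv', add', by simpa using casc'⟩

end HQ

/-- The Hessian quotient `λ ↦ σ_k(λ)/σ_{k-1}(λ)` is concave on `Γ_{k-1}`. -/
theorem hessian_quotient_concave (n k : ℕ) (hk2 : 2 ≤ k) (hkn : k ≤ n) :
    ConcaveOn ℝ (GammaCone n (k-1))
      (fun lam => esymm n k lam / esymm n (k-1) lam) := by
  obtain ⟨M, rfl⟩ : ∃ M, k = M + 2 := ⟨k - 2, by omega⟩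
  obtain ⟨conv, add, -⟩ := HQ.master (ι := Fin n) (M + 1)
  have hmem : ∀ lam : Fin n → ℝ, lam ∈ GammaCone n (M + 2 - 1) ↔ HQ.Gmem (M+1) Finset.univ lam := by
    intro lam
    exact Iff.rfl
  have hQf : ∀ lam : Fin n → ℝ, esymm n (M+2) lam / esymm n (M+2-1) lam
      = HQ.Qf (M+1) Finset.univ lam := by
    intro lam
    rfl
  constructor
  · intro x hx y hy a b ha hb hab
    have := conv Finset.univ x y a b ha hb (by rw [hab]; norm_num)
      ((hmem x).1 hx) ((hmem y).1 hy)
    exact (hmem _).2 this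
  · intro x hx y hy a b ha hb hab
    simp only [hQf, smul_eq_mul]
    rcases eq_or_ne a 0 with rfl | hane
    · have hb1 : b = 1 := by simpa using hab
      subst hb1
      simp
    rcases eq_or_ne b 0 with rfl | hbne
    · have ha1 : a = 1 := by simpa using hab
      subst ha1
      simp
    · have ha' : 0 < a := lt_of_le_of_ne ha (Ne.symm hane)
      have hb' : 0 < b := lt_of_le_of_ne hb (Ne.symm hbne)
      have h1 := add Finset.univ (a • x) (b • y)
        (HQ.Gmem_smul ha' ((hmem x).1 hx)) (HQ.Gmem_smul hb' ((hmem y).1 hy))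
      rw [HQ.Qf_smul ha'.ne', HQ.Qf_smul hb'.ne'] at h1
      exact h1
end

section
/- (Cauchy interlacing.) Let n ≥ 2, let A be an n×n complex Hermitian matrix, and let A′ be the (n−1)×(n−1) Hermitian matrix obtained by deleting the last row and last column of A. Let λ_1(A) ≤ λ_2(A) ≤ ⋯ ≤ λ_n(A) be the eigenvalues of A in increasing order, and λ_1′(A′) ≤ ⋯ ≤ λ_{n−1}′(A′) those of A′. Then for every 1 ≤ j ≤ n−1, λ_j(A) ≤ λ_j′(A′) ≤ λ_{j+1}(A). -/
/-- The eigenvalues of a Hermitian matrix, sorted in increasing order. -/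
noncomputable def sortedEigs {n : ℕ} {A : Matrix (Fin n) (Fin n) ℂ}
    (hA : A.IsHermitian) : Fin n → ℝ :=
  hA.eigenvalues ∘ Tuple.sort hA.eigenvalues

/-!
The quadratic form of `A'` is that of `A` restricted to the coordinate subspace `F` of vectors
with last coordinate `0`. The eigenvectors of `A` for `λ_j(A), …, λ_n(A)` span a space of
dimension `n - j + 1`, those of `A'` for `λ'_1, …, λ'_j` a subspace of `F` of dimension `j`; as
the dimensions add up to `n + 1`, the two share a nonzero vector, whose Rayleigh quotient is at
least `λ_j(A)` and at most `λ'_j`. The same count with `λ_1(A), …, λ_{j+1}(A)` and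
`λ'_j, …, λ'_{n-1}` gives the upper bound; for a principal submatrix of codimension `d` it gives
`λ_j(A) ≤ λ'_j ≤ λ_{j+d}(A)`.
-/

open Module RCLike
open scoped InnerProductSpace

theorem LinearIndependent.finrank_span_image {R M ι : Type*} [Ring R] [Nontrivial R]
    [StrongRankCondition R] [AddCommGroup M] [Module R M] {v : ι → M}
    (hv : LinearIndependent R v) (S : Finset ι) :
    finrank R (Submodule.span R (v '' S)) = S.card := by
  rw [Set.image_eq_range]
  exact (finrank_span_eq_card (hv.comp _ Subtype.val_injective)).trans (Fintype.card_coe S)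

theorem Submodule.exists_ne_zero_mem_of_finrank_lt {K V W : Type*} [DivisionRing K]
    [AddCommGroup V] [Module K V] [AddCommGroup W] [Module K W] [FiniteDimensional K V]
    {f : W →ₗ[K] V} (hf : Function.Injective f) {p : Submodule K V} {q : Submodule K W}
    (h : finrank K V < finrank K p + finrank K q) : ∃ y ∈ q, y ≠ 0 ∧ f y ∈ p := by
  by_contra! hpq
  refine (finrank_add_finrank_le_of_disjoint (s := p) (t := q.map f) ?_).not_gt ?_
  · rw [Submodule.disjoint_def]
    rintro _ hx ⟨y, hy, rfl⟩
    by_contra hne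
    exact hpq y hy (by rintro rfl; simp at hne) hx
  · rwa [← (q.equivMapOfInjective f hf).finrank_eq]

section Rayleigh

variable {𝕜 E ι : Type*} [RCLike 𝕜] [NormedAddCommGroup E] [InnerProductSpace 𝕜 E] [Fintype ι]
  {T : E →ₗ[𝕜] E} {w : OrthonormalBasis ι 𝕜 E} {μ : ι → ℝ}

theorem OrthonormalBasis.inner_eq_zero_of_mem_span {S : Finset ι} {x : E}
    (hx : x ∈ Submodule.span 𝕜 (w '' S)) {i : ι} (hi : i ∉ S) : ⟪w i, x⟫_𝕜 = 0 := by
  rw [← w.repr_apply_apply, ← w.coe_toBasis_repr_apply]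
  rw [← w.coe_toBasis, w.toBasis.mem_span_image] at hx
  exact Finsupp.notMem_support_iff.mp fun h => hi (hx h)

theorem LinearMap.IsSymmetric.re_inner_apply_self_eq_sum (hT : T.IsSymmetric)
    (hw : ∀ i, T (w i) = (μ i : 𝕜) • w i) (x : E) :
    re ⟪x, T x⟫_𝕜 = ∑ i, μ i * ‖⟪w i, x⟫_𝕜‖ ^ 2 := by
  have hTw (i : ι) : ⟪w i, T x⟫_𝕜 = μ i * ⟪w i, x⟫_𝕜 := by
    rw [← hT, hw, inner_smul_left, conj_ofReal]
  rw [← w.sum_inner_mul_inner x (T x), map_sum]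
  refine Finset.sum_congr rfl fun i _ => ?_
  rw [hTw, mul_left_comm, re_ofReal_mul, ← inner_conj_symm x, RCLike.conj_mul, ← ofReal_pow,
    ofReal_re]

variable (hT : T.IsSymmetric) (hw : ∀ i, T (w i) = (μ i : 𝕜) • w i)
include hT hw

theorem LinearMap.IsSymmetric.re_inner_apply_self_le_of_mem_span {S : Finset ι} {c : ℝ}
    (hc : ∀ i ∈ S, μ i ≤ c) {x : E} (hx : x ∈ Submodule.span 𝕜 (w '' S)) :
    re ⟪x, T x⟫_𝕜 ≤ c * ‖x‖ ^ 2 := by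
  rw [hT.re_inner_apply_self_eq_sum hw, ← w.sum_sq_norm_inner_right, Finset.mul_sum]
  refine Finset.sum_le_sum fun i _ => ?_
  by_cases hi : i ∈ S
  · exact mul_le_mul_of_nonneg_right (hc i hi) (sq_nonneg _)
  · simp [w.inner_eq_zero_of_mem_span hx hi]

theorem LinearMap.IsSymmetric.le_re_inner_apply_self_of_mem_span {S : Finset ι} {c : ℝ}
    (hc : ∀ i ∈ S, c ≤ μ i) {x : E} (hx : x ∈ Submodule.span 𝕜 (w '' S)) :
    c * ‖x‖ ^ 2 ≤ re ⟪x, T x⟫_𝕜 := by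
  rw [hT.re_inner_apply_self_eq_sum hw, ← w.sum_sq_norm_inner_right, Finset.mul_sum]
  refine Finset.sum_le_sum fun i _ => ?_
  by_cases hi : i ∈ S
  · exact mul_le_mul_of_nonneg_right (hc i hi) (sq_nonneg _)
  · simp [w.inner_eq_zero_of_mem_span hx hi]

end Rayleigh

section Compression

variable {𝕜 E F : Type*} [RCLike 𝕜] [NormedAddCommGroup E] [InnerProductSpace 𝕜 E]
  [NormedAddCommGroup F] [InnerProductSpace 𝕜 F]

def LinearMap.IsCompression (T : E →ₗ[𝕜] E) (ι : F →ₗᵢ[𝕜] E) (T' : F →ₗ[𝕜] F) : Prop :=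
  ∀ y, ⟪ι y, T (ι y)⟫_𝕜 = ⟪y, T' y⟫_𝕜

namespace LinearMap.IsCompression

variable {ι : F →ₗᵢ[𝕜] E} {T : E →ₗ[𝕜] E} {T' : F →ₗ[𝕜] F} (hι : T.IsCompression ι T')
  {p : Submodule 𝕜 E} {q : Submodule 𝕜 F} {c c' : ℝ}
include hι

theorem le_of_finrank_lt [FiniteDimensional 𝕜 E] (hdim : finrank 𝕜 E < finrank 𝕜 p + finrank 𝕜 q)
    (hp : ∀ x ∈ p, re ⟪x, T x⟫_𝕜 ≤ c * ‖x‖ ^ 2) (hq : ∀ y ∈ q, c' * ‖y‖ ^ 2 ≤ re ⟪y, T' y⟫_𝕜) :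
    c' ≤ c := by
  obtain ⟨y, hyq, hy0, hyp⟩ := Submodule.exists_ne_zero_mem_of_finrank_lt ι.injective hdim
  refine le_of_mul_le_mul_right ?_ (pow_pos (norm_pos_iff.mpr hy0) 2)
  calc c' * ‖y‖ ^ 2 ≤ re ⟪y, T' y⟫_𝕜 := hq y hyq
    _ = re ⟪ι y, T (ι y)⟫_𝕜 := by rw [hι]
    _ ≤ c * ‖ι y‖ ^ 2 := hp _ hyp
    _ = c * ‖y‖ ^ 2 := by rw [ι.norm_map]

theorem le_of_finrank_lt' [FiniteDimensional 𝕜 E] (hdim : finrank 𝕜 E < finrank 𝕜 p + finrank 𝕜 q)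
    (hp : ∀ x ∈ p, c' * ‖x‖ ^ 2 ≤ re ⟪x, T x⟫_𝕜) (hq : ∀ y ∈ q, re ⟪y, T' y⟫_𝕜 ≤ c * ‖y‖ ^ 2) :
    c' ≤ c := by
  obtain ⟨y, hyq, hy0, hyp⟩ := Submodule.exists_ne_zero_mem_of_finrank_lt ι.injective hdim
  refine le_of_mul_le_mul_right ?_ (pow_pos (norm_pos_iff.mpr hy0) 2)
  calc c' * ‖y‖ ^ 2 = c' * ‖ι y‖ ^ 2 := by rw [ι.norm_map]
    _ ≤ re ⟪ι y, T (ι y)⟫_𝕜 := hp _ hyp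
    _ = re ⟪y, T' y⟫_𝕜 := by rw [hι]
    _ ≤ c * ‖y‖ ^ 2 := hq y hyq

theorem interlace {k d : ℕ} (hT : T.IsSymmetric) (hT' : T'.IsSymmetric)
    {w : OrthonormalBasis (Fin (k + d)) 𝕜 E} {μ : Fin (k + d) → ℝ} (hμ : Monotone μ)
    (hw : ∀ i, T (w i) = (μ i : 𝕜) • w i)
    {u : OrthonormalBasis (Fin k) 𝕜 F} {μ' : Fin k → ℝ} (hμ' : Monotone μ')
    (hu : ∀ i, T' (u i) = (μ' i : 𝕜) • u i) (j : Fin k) :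
    μ (j.castAdd d) ≤ μ' j ∧ μ' j ≤ μ (j.addNat d) := by
  have := Module.Finite.of_basis w.toBasis
  have hE : finrank 𝕜 E = k + d := by rw [finrank_eq_card_basis w.toBasis, Fintype.card_fin]
  have hw_span := w.orthonormal.linearIndependent.finrank_span_image
  have hu_span := u.orthonormal.linearIndependent.finrank_span_image
  constructor
  · refine hι.le_of_finrank_lt' (p := .span 𝕜 (w '' Finset.Ici (j.castAdd d)))
      (q := .span 𝕜 (u '' Finset.Iic j)) ?_
      (fun x => hT.le_re_inner_apply_self_of_mem_span hw fun i hi => hμ (Finset.mem_Ici.mp hi))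
      (fun y => hT'.re_inner_apply_self_le_of_mem_span hu fun i hi => hμ' (Finset.mem_Iic.mp hi))
    rw [hE, hw_span, hu_span, Fin.card_Ici, Fin.card_Iic, Fin.val_castAdd]
    omega
  · refine hι.le_of_finrank_lt (p := .span 𝕜 (w '' Finset.Iic (j.addNat d)))
      (q := .span 𝕜 (u '' Finset.Ici j)) ?_
      (fun x => hT.re_inner_apply_self_le_of_mem_span hw fun i hi => hμ (Finset.mem_Iic.mp hi))
      (fun y => hT'.le_re_inner_apply_self_of_mem_span hu fun i hi => hμ' (Finset.mem_Ici.mp hi))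
    rw [hE, hw_span, hu_span, Fin.card_Ici, Fin.card_Iic, Fin.val_addNat]
    omega

end LinearMap.IsCompression

end Compression

section Submatrix

variable {𝕜 m n : Type*} [RCLike 𝕜] [Fintype m] [Fintype n] {e : m → n}

noncomputable def EuclideanSpace.extendByZero (he : Function.Injective e) :
    EuclideanSpace 𝕜 m →ₗᵢ[𝕜] EuclideanSpace 𝕜 n :=
  LinearMap.isometryOfInner
    ((WithLp.linearEquiv 2 𝕜 (n → 𝕜)).symm.toLinearMap ∘ₗ Function.ExtendByZero.linearMap 𝕜 e ∘ₗ
      (WithLp.linearEquiv 2 𝕜 (m → 𝕜)).toLinearMap) fun x y => by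
    simp only [PiLp.inner_apply]
    refine (Fintype.sum_of_injective e he _ _ (fun i hi => ?_) fun j => ?_).symm
    · simp [Function.extend_apply' _ _ _ fun ⟨j, hj⟩ => hi ⟨j, hj⟩]
    · simp [he.extend_apply]

theorem Matrix.isCompression_submatrix [DecidableEq m] [DecidableEq n] (A : Matrix n n 𝕜)
    (he : Function.Injective e) :
    (toEuclideanLin A).IsCompression (EuclideanSpace.extendByZero he)
      (toEuclideanLin (A.submatrix e e)) := by
  intro y
  have hzero (i : n) (hi : i ∉ Set.range e) : EuclideanSpace.extendByZero he y i = 0 :=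
    Function.extend_apply' _ _ _ fun ⟨j, hj⟩ => hi ⟨j, hj⟩
  have happly (j : m) : EuclideanSpace.extendByZero he y (e j) = y j := he.extend_apply _ _ _
  simp only [PiLp.inner_apply, toLpLin_apply, Matrix.mulVec, dotProduct]
  refine (Fintype.sum_of_injective e he _ _ (fun i hi => by simp [hzero i hi]) fun j => ?_).symm
  rw [happly]
  congr 1
  exact Fintype.sum_of_injective e he _ _ (fun i hi => by simp [hzero i hi]) fun k => by
    simp [happly]

end Submatrix

section SortedEigs

variable {n : ℕ} {A : Matrix (Fin n) (Fin n) ℂ} (hA : A.IsHermitian)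

theorem sortedEigs_monotone : Monotone (sortedEigs hA) := Tuple.monotone_sort _

noncomputable def Matrix.IsHermitian.sortedEigenvectorBasis :
    OrthonormalBasis (Fin n) ℂ (EuclideanSpace ℂ (Fin n)) :=
  hA.eigenvectorBasis.reindex (Tuple.sort hA.eigenvalues).symm

theorem Matrix.IsHermitian.toEuclideanLin_sortedEigenvectorBasis (i : Fin n) :
    Matrix.toEuclideanLin A (hA.sortedEigenvectorBasis i) =
      (sortedEigs hA i : ℂ) • hA.sortedEigenvectorBasis i := by
  simp only [sortedEigenvectorBasis, OrthonormalBasis.reindex_apply, Equiv.symm_symm,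
    Matrix.toLpLin_apply, hA.mulVec_eigenvectorBasis, sortedEigs, Function.comp_apply]
  rw [WithLp.toLp_smul, WithLp.toLp_ofLp, Complex.coe_smul]

end SortedEigs

theorem sortedEigs_interlace_submatrix {k d : ℕ} {A : Matrix (Fin (k + d)) (Fin (k + d)) ℂ}
    (hA : A.IsHermitian) {e : Fin k → Fin (k + d)} (he : Function.Injective e) (j : Fin k) :
    sortedEigs hA (j.castAdd d) ≤ sortedEigs (hA.submatrix e) j ∧
      sortedEigs (hA.submatrix e) j ≤ sortedEigs hA (j.addNat d) :=
  (Matrix.isCompression_submatrix A he).interlace (Matrix.isSymmetric_toEuclideanLin_iff.mpr hA)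
    (Matrix.isSymmetric_toEuclideanLin_iff.mpr (hA.submatrix e)) (sortedEigs_monotone hA)
    hA.toEuclideanLin_sortedEigenvectorBasis (sortedEigs_monotone _)
    (hA.submatrix e).toEuclideanLin_sortedEigenvectorBasis j

/-- Cauchy interlacing: the sorted eigenvalues of the principal `(n-1) × (n-1)`
submatrix (deleting the last row and column) of a Hermitian matrix interlace those
of the matrix itself: `λ_j(A) ≤ λ_j'(A') ≤ λ_{j+1}(A)`. -/
theorem cauchy_interlacing (m : ℕ) (A : Matrix (Fin (m+2)) (Fin (m+2)) ℂ)
    (hA : A.IsHermitian) (j : Fin (m+1)) :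
    sortedEigs hA j.castSucc ≤ sortedEigs (hA.submatrix Fin.castSucc) j ∧
      sortedEigs (hA.submatrix Fin.castSucc) j ≤ sortedEigs hA j.succ :=
  sortedEigs_interlace_submatrix (k := m + 1) (d := 1) hA (Fin.castSucc_injective _) j
end

section
/- Let 2 ≤ k ≤ n and let β_0,…,β_{k−2} be nonnegative real numbers. Let μ = (μ_1,…,μ_{n−1}) ∈ ℝ^{n−1} be such that σ_{k−2}(μ) > 0 and (μ_1,…,μ_{n−1},t) ∈ Γ_{k−1} ⊂ ℝ^n for all sufficiently large t ∈ ℝ. Then lim_{t→+∞} f(μ_1,…,μ_{n−1},t) = σ_{k−1}(μ)/σ_{k−2}(μ) − Σ_{l=1}^{k−2} β_l σ_{l−1}(μ)/σ_{k−2}(μ), where on the right-hand side σ_j denotes the j-th elementary symmetric function of the n−1 variables μ_1,…,μ_{n−1}. -/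
open Finset

/-! Since `σ_{l+1}(μ, t) = σ_{l+1}(μ) + t σ_l(μ)`, every quotient `σ_l / σ_{k-1}` occurring in `f(μ, t)`
is a ratio of affine functions of `t` whose denominator has slope `σ_{k-2}(μ) > 0`, so it tends to the
ratio of the slopes, `σ_{l-1}(μ) / σ_{k-2}(μ)`; the term `l = 0` has constant numerator `σ_0 = 1` and
tends to `0`. -/

open Filter Topology

theorem Multiset.esymm_cons_succ {R : Type*} [CommSemiring R] (a : R) (s : Multiset R) (n : ℕ) :
    (a ::ₘ s).esymm (n + 1) = s.esymm (n + 1) + a * s.esymm n := by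
  simp [Multiset.esymm, Multiset.powersetCard_cons, Multiset.map_map, Multiset.sum_map_mul_left]

theorem esymm_eq_multiset_esymm (n k : ℕ) (lam : Fin n → ℝ) :
    esymm n k lam = ((univ : Finset (Fin n)).val.map lam).esymm k :=
  (Finset.esymm_map_val lam univ k).symm

theorem esymm_zero_eq_one (n : ℕ) (lam : Fin n → ℝ) : esymm n 0 lam = 1 := by
  simp [esymm]

theorem esymm_snoc_succ (m j : ℕ) (mu : Fin m → ℝ) (t : ℝ) :
    esymm (m + 1) (j + 1) (Fin.snoc mu t) = esymm m (j + 1) mu + t * esymm m j mu := by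
  have hmap : (univ : Finset (Fin (m + 1))).val.map (Fin.snoc mu t)
      = t ::ₘ (univ : Finset (Fin m)).val.map mu := by
    simp only [Fin.univ_val_map, List.ofFn_succ', Fin.snoc_castSucc, Fin.snoc_last]
    simp
  rw [esymm_eq_multiset_esymm, hmap, Multiset.esymm_cons_succ, ← esymm_eq_multiset_esymm,
    ← esymm_eq_multiset_esymm]

theorem tendsto_affine_div_affine_atTop (a b c d : ℝ) (hd : d ≠ 0) :
    Tendsto (fun t : ℝ => (a + t * b) / (c + t * d)) atTop (𝓝 (b / d)) := by
  have hlim : Tendsto (fun t : ℝ => (a * t⁻¹ + b) / (c * t⁻¹ + d)) atTop (𝓝 (b / d)) := by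
    have h := tendsto_inv_atTop_zero (𝕜 := ℝ)
    convert ((h.const_mul a).add_const b).div ((h.const_mul c).add_const d) (by simpa) using 2
      <;> simp
  refine hlim.congr' ?_
  filter_upwards [eventually_gt_atTop 0] with t ht
  rw [← mul_div_mul_left _ _ ht.ne']
  field_simp

theorem tendsto_esymm_snoc_div_atTop (m l j : ℕ) (mu : Fin m → ℝ) (hd : esymm m j mu ≠ 0) :
    Tendsto
      (fun t => esymm (m + 1) (l + 1) (Fin.snoc mu t) / esymm (m + 1) (j + 1) (Fin.snoc mu t))
      atTop (𝓝 (esymm m l mu / esymm m j mu)) := by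
  simp only [esymm_snoc_succ]
  exact tendsto_affine_div_affine_atTop _ _ _ _ hd

theorem tendsto_esymm_zero_snoc_div_atTop (m j : ℕ) (mu : Fin m → ℝ) (hd : esymm m j mu ≠ 0) :
    Tendsto (fun t => esymm (m + 1) 0 (Fin.snoc mu t) / esymm (m + 1) (j + 1) (Fin.snoc mu t))
      atTop (𝓝 0) := by
  simpa [esymm_zero_eq_one, esymm_snoc_succ] using tendsto_affine_div_affine_atTop 1 0 _ _ hd

theorem fmix_tendsto_at_infinity_general (m k : ℕ) (hk2 : 2 ≤ k)
    (β : ℕ → ℝ)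
    (mu : Fin m → ℝ) (hmu : 0 < esymm m (k-2) mu) :
    Filter.Tendsto (fun t : ℝ => fmix (m+1) k β (Fin.snoc mu t)) Filter.atTop
      (nhds (esymm m (k-1) mu / esymm m (k-2) mu
        - ∑ l ∈ Finset.Icc 1 (k-2), β l * (esymm m (l-1) mu / esymm m (k-2) mu))) := by
  obtain ⟨j, rfl⟩ : ∃ j, k = j + 2 := ⟨k - 2, by omega⟩
  unfold fmix
  simp only [Nat.add_sub_cancel, show j + 2 - 1 = j + 1 by omega] at hmu ⊢
  have hIcc : ∑ l ∈ Icc 1 j, β l * (esymm m (l - 1) mu / esymm m j mu)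
      = ∑ l ∈ range j, β (l + 1) * (esymm m l mu / esymm m j mu) + β 0 * 0 := by
    rw [← Ico_add_one_right_eq_Icc, sum_Ico_eq_sum_range]
    simp [add_comm 1]
  simp only [hIcc, sum_range_succ']
  refine (tendsto_esymm_snoc_div_atTop m (j + 1) j mu hmu.ne').sub
    ((tendsto_finsetSum _ fun l _ => ?_).add ?_)
  · exact (tendsto_esymm_snoc_div_atTop m l j mu hmu.ne').const_mul _
  · exact (tendsto_esymm_zero_snoc_div_atTop m j mu hmu.ne').const_mul _

/-- Limit of the mixed Hessian operator as the last variable tends to `+∞`: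
`lim_{t→∞} f(μ₁,…,μ_{n-1},t) = σ_{k-1}(μ)/σ_{k-2}(μ) - ∑_{l=1}^{k-2} β_l σ_{l-1}(μ)/σ_{k-2}(μ)`. -/
theorem fmix_tendsto_at_infinity (m k : ℕ) (hk2 : 2 ≤ k) (hkn : k ≤ m + 1)
    (β : ℕ → ℝ) (hβ : ∀ l, l ≤ k - 2 → 0 ≤ β l)
    (mu : Fin m → ℝ) (hmu : 0 < esymm m (k-2) mu)
    (hG : ∃ T : ℝ, ∀ t ≥ T, Fin.snoc mu t ∈ GammaCone (m+1) (k-1)) :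
    Filter.Tendsto (fun t : ℝ => fmix (m+1) k β (Fin.snoc mu t)) Filter.atTop
      (nhds (esymm m (k-1) mu / esymm m (k-2) mu
        - ∑ l ∈ Finset.Icc 1 (k-2), β l * (esymm m (l-1) mu / esymm m (k-2) mu))) :=
  fmix_tendsto_at_infinity_general m k hk2 β mu hmu
end
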